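/- arXiv:1501.06127 — 7 statements merged into one kernel-verified Lean document; each statement's English description precedes it below -/
import Mathlib

section
/- Let α ∈ A₁ and let L(λ) = L(λ; α, α). Set A = λ(2α(Dα)² − α_xx) + λ³α_x − λ⁵α and B = (Dα_xx) − 2(Dα)³ − 3α_xα(Dα) − λ²(Dα_x) + λ⁴(Dα), and let P(λ) be the 3×3 matrix over A with rows [λ²((Dα)² + 2α_xα), B, A], [B + 2λ²(Dα_x), λ⁶ − λ²(Dα)², λD(α_xα) + λ³α(Dα)], [2λ³α_x − A, λD(α_xα) − λ³α(Dα), λ⁶ + 2λ²α_xα]. Then the zero-curvature equation ∂_t L − (DP) + L·P − P†·L = 0 holds identically in λ if and only if α satisfies the supersymmetric modified Korteweg–de Vries equation α_t = α_xxx − 3α(Dα)(Dα_x) − 3(Dα)²α_x. -/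
open Polynomial Matrix

/-- A supercommutative superalgebra `A = A₀ ⊕ A₁` over `ℂ`. -/
structure SuperAlgebra (A : Type*) [Ring A] [Algebra ℂ A] where
  A0 : Submodule ℂ A
  A1 : Submodule ℂ A
  isCompl : IsCompl A0 A1
  algebraMap_mem : ∀ c : ℂ, algebraMap ℂ A c ∈ A0
  mul_mem00 : ∀ {a b : A}, a ∈ A0 → b ∈ A0 → a * b ∈ A0
  mul_mem01 : ∀ {a b : A}, a ∈ A0 → b ∈ A1 → a * b ∈ A1
  mul_mem10 : ∀ {a b : A}, a ∈ A1 → b ∈ A0 → a * b ∈ A1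
  mul_mem11 : ∀ {a b : A}, a ∈ A1 → b ∈ A1 → a * b ∈ A0
  even_comm : ∀ {a : A}, a ∈ A0 → ∀ b : A, a * b = b * a
  odd_anticomm : ∀ {a b : A}, a ∈ A1 → b ∈ A1 → a * b = -(b * a)

/-- An odd superderivation `D` on a superalgebra: `D(ab) = (Da)b + a†(Db)`. -/
structure OddDerivation {A : Type*} [Ring A] [Algebra ℂ A] (S : SuperAlgebra A) where
  D : A →ₗ[ℂ] A
  map_even : ∀ {a : A}, a ∈ S.A0 → D a ∈ S.A1
  map_odd : ∀ {a : A}, a ∈ S.A1 → D a ∈ S.A0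
  leibniz_even : ∀ {a : A}, a ∈ S.A0 → ∀ b : A, D (a * b) = D a * b + a * D b
  leibniz_odd : ∀ {a : A}, a ∈ S.A1 → ∀ b : A, D (a * b) = D a * b - a * D b

/-- An even (parity preserving) `ℂ`-linear derivation on a superalgebra. -/
structure EvenDerivation {A : Type*} [Ring A] [Algebra ℂ A] (S : SuperAlgebra A) where
  D : A →ₗ[ℂ] A
  map_even : ∀ {a : A}, a ∈ S.A0 → D a ∈ S.A0
  map_odd : ∀ {a : A}, a ∈ S.A1 → D a ∈ S.A1
  leibniz : ∀ a b : A, D (a * b) = D a * b + a * D b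

/-- Apply a map coefficientwise to a polynomial (extension of a derivation to
polynomials in the central even indeterminate `λ = X`). -/
noncomputable def cwise {A : Type*} [Ring A] (f : A → A) (P : Polynomial A) : Polynomial A :=
  P.sum fun n a => Polynomial.monomial n (f a)

/-- The entrywise super-parity involution `M ↦ M†` for `3 × 3` matrices having the
standard parity pattern (even entries at `(1,1), (1,2), (2,1), (2,2), (3,3)`; odd entries
at `(1,3), (2,3), (3,1), (3,2)`): it negates exactly the odd positions. -/
def sdag {R : Type*} [Ring R] (M : Matrix (Fin 3) (Fin 3) R) : Matrix (Fin 3) (Fin 3) R :=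
  Matrix.of fun i j => if (i = 2 ∧ j ≠ 2) ∨ (i ≠ 2 ∧ j = 2) then -M i j else M i j

/-- The SUSY AKNS spectral matrix `L(λ; α, β)`, with rows `[0, α, 0], [β, 0, λ], [0, λ, 0]`. -/
def Lgen {R : Type*} [Ring R] (lam a b : R) : Matrix (Fin 3) (Fin 3) R :=
  !![0, a, 0; b, 0, lam; 0, lam, 0]

/-- `L(λ; α, β)` with entries polynomial in the indeterminate `λ = X`. -/
noncomputable def Lpoly {A : Type*} [Ring A] (a b : A) : Matrix (Fin 3) (Fin 3) (Polynomial A) :=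
  Lgen (X : Polynomial A) (C a) (C b)

/-- The matrix `P(λ)` of the supersymmetric MKdV flow (here `∂ = D ∘ D`,
`α_x = D²α`, `α_xx = D⁴α`, and
`A = λ(2α(Dα)² − α_xx) + λ³α_x − λ⁵α`,
`B = (Dα_xx) − 2(Dα)³ − 3α_xα(Dα) − λ²(Dα_x) + λ⁴(Dα)`). -/
noncomputable def PmKdV {A : Type*} [Ring A] (D : A → A) (α : A) :
    Matrix (Fin 3) (Fin 3) (Polynomial A) :=
  !![X ^ 2 * C ((D α) ^ 2 + 2 * (D (D α)) * α),
       C (D (D (D (D (D α)))) - 2 * (D α) ^ 3 - 3 * (D (D α)) * α * (D α))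
         - X ^ 2 * C (D (D (D α))) + X ^ 4 * C (D α),
       X * C (2 * α * (D α) ^ 2 - D (D (D (D α)))) + X ^ 3 * C (D (D α)) - X ^ 5 * C α;
     C (D (D (D (D (D α)))) - 2 * (D α) ^ 3 - 3 * (D (D α)) * α * (D α))
         - X ^ 2 * C (D (D (D α))) + X ^ 4 * C (D α) + X ^ 2 * C (2 * (D (D (D α)))),
       X ^ 6 - X ^ 2 * C ((D α) ^ 2),
       X * C (D ((D (D α)) * α)) + X ^ 3 * C (α * (D α));
     X ^ 3 * C (2 * (D (D α)))
         - (X * C (2 * α * (D α) ^ 2 - D (D (D (D α)))) + X ^ 3 * C (D (D α)) - X ^ 5 * C α),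
       X * C (D ((D (D α)) * α)) - X ^ 3 * C (α * (D α)),
       X ^ 6 + X ^ 2 * C (2 * (D (D α)) * α)]


section Aux
open Polynomial
variable {A : Type*} [Ring A] [Algebra ℂ A]

lemma cwise_zero (f : A →ₗ[ℂ] A) : cwise (fun a => f a) (0 : A[X]) = 0 :=
  Polynomial.sum_zero_index _

lemma cwise_monomial (f : A →ₗ[ℂ] A) (n : ℕ) (u : A) :
    cwise (fun a => f a) (monomial n u) = monomial n (f u) :=
  Polynomial.sum_monomial_index u _ (by simp)

lemma cwise_add (f : A →ₗ[ℂ] A) (p q : A[X]) :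
    cwise (fun a => f a) (p + q) = cwise (fun a => f a) p + cwise (fun a => f a) q := by
  unfold cwise
  apply Polynomial.sum_add_index <;> simp

lemma cwise_neg (f : A →ₗ[ℂ] A) (p : A[X]) :
    cwise (fun a => f a) (-p) = - cwise (fun a => f a) p := by
  have h := cwise_add f p (-p)
  simp only [add_neg_cancel, cwise_zero] at h
  exact (neg_eq_of_add_eq_zero_right h.symm).symm

lemma cwise_sub (f : A →ₗ[ℂ] A) (p q : A[X]) :
    cwise (fun a => f a) (p - q) = cwise (fun a => f a) p - cwise (fun a => f a) q := by
  rw [sub_eq_add_neg, cwise_add, cwise_neg, sub_eq_add_neg]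

lemma cwise_Xq : ∀ (f : A →ₗ[ℂ] A), cwise (fun a => f a) (X : A[X]) = monomial 1 (f 1) := by
  intro f
  rw [← Polynomial.monomial_one_one_eq_X, cwise_monomial]

lemma X_mul_monomial' {R : Type*} [Semiring R] (n : ℕ) (u : R) :
    (X : R[X]) * monomial n u = monomial (n+1) u := by
  rw [← Polynomial.monomial_one_one_eq_X, Polynomial.monomial_mul_monomial, one_mul, add_comm]

lemma monomial_mul_X' {R : Type*} [Semiring R] (n : ℕ) (u : R) :
    (monomial n u : R[X]) * X = monomial (n+1) u := by
  rw [← Polynomial.monomial_one_one_eq_X, Polynomial.monomial_mul_monomial, mul_one]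

end Aux

set_option maxHeartbeats 2000000 in
/-- The zero-curvature equation `∂ₜL − (DP) + L·P − P†·L = 0` holds
identically in `λ` iff `α` solves the supersymmetric MKdV equation
`α_t = α_xxx − 3α(Dα)(Dα_x) − 3(Dα)²α_x`. -/
theorem susy_mkdv_zero_curvature {A : Type*} [Ring A] [Algebra ℂ A]
    (S : SuperAlgebra A) (𝒟 : OddDerivation S) (𝒯 : EvenDerivation S)
    (hcomm : ∀ a : A, 𝒯.D (𝒟.D a) = 𝒟.D (𝒯.D a))
    (α : A) (hα : α ∈ S.A1) :
    ((Lpoly α α).map (cwise fun a => 𝒯.D a)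
        - (PmKdV (fun a => 𝒟.D a) α).map (cwise fun a => 𝒟.D a)
        + Lpoly α α * PmKdV (fun a => 𝒟.D a) α
        - sdag (PmKdV (fun a => 𝒟.D a) α) * Lpoly α α = 0)
      ↔ 𝒯.D α =
          𝒟.D (𝒟.D (𝒟.D (𝒟.D (𝒟.D (𝒟.D α)))))
            - 3 * α * (𝒟.D α) * (𝒟.D (𝒟.D (𝒟.D α)))
            - 3 * (𝒟.D α) ^ 2 * (𝒟.D (𝒟.D α)) := by
  
  -- main proof
  have half : ∀ x : A, x + x = 0 → x = 0 := by
    intro x h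
    calc x = ((2:ℂ)⁻¹) • ((2:ℂ) • x) := by rw [smul_smul]; norm_num
    _ = ((2:ℂ)⁻¹) • (x + x) := by rw [two_smul]
    _ = 0 := by rw [h, smul_zero]
  have h1mem : (1:A) ∈ S.A0 := by simpa using S.algebraMap_mem 1
  have hD1 : 𝒟.D 1 = 0 := by
    have h1 := 𝒟.leibniz_even h1mem 1
    simp only [one_mul, mul_one] at h1
    exact left_eq_add.mp h1
  have hT1 : 𝒯.D 1 = 0 := by
    have h1 := 𝒯.leibniz 1 1
    simp only [one_mul, mul_one] at h1
    exact left_eq_add.mp h1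
  have hD2 : ∀ z : A, 𝒟.D (2 * z) = 2 * 𝒟.D z := by
    intro z; rw [two_mul, map_add, two_mul]
  have hD3 : ∀ z : A, 𝒟.D (3 * z) = 3 * 𝒟.D z := by
    intro z
    have e3 : (3 : A) = 1 + 1 + 1 := by norm_num
    rw [e3, add_mul, add_mul, one_mul, map_add, map_add, add_mul, add_mul, one_mul]
  have hmb : 𝒟.D α ∈ S.A0 := 𝒟.map_odd hα
  have hmc : 𝒟.D (𝒟.D α) ∈ S.A1 := 𝒟.map_even hmb
  have hmd : 𝒟.D (𝒟.D (𝒟.D α)) ∈ S.A0 := 𝒟.map_odd hmc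
  have hme : 𝒟.D (𝒟.D (𝒟.D (𝒟.D α))) ∈ S.A1 := 𝒟.map_even hmd
  have hmf : 𝒟.D (𝒟.D (𝒟.D (𝒟.D (𝒟.D α)))) ∈ S.A0 := 𝒟.map_odd hme
  have hmg : 𝒟.D (𝒟.D (𝒟.D (𝒟.D (𝒟.D (𝒟.D α))))) ∈ S.A1 := 𝒟.map_even hmf
  have hsba : (𝒟.D α) * (α) = (α) * (𝒟.D α) := S.even_comm hmb (α)
  have hsba' : ∀ z : A, (𝒟.D α) * ((α) * z) = (α) * ((𝒟.D α) * z) := fun z => by rw [← mul_assoc, hsba, mul_assoc]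
  have hsca : (𝒟.D (𝒟.D α)) * (α) = -((α) * (𝒟.D (𝒟.D α))) := S.odd_anticomm hmc hα
  have hsca' : ∀ z : A, (𝒟.D (𝒟.D α)) * ((α) * z) = -((α) * ((𝒟.D (𝒟.D α)) * z)) := fun z => by rw [← mul_assoc, hsca, neg_mul, mul_assoc]
  have hscb : (𝒟.D (𝒟.D α)) * (𝒟.D α) = (𝒟.D α) * (𝒟.D (𝒟.D α)) := (S.even_comm hmb (𝒟.D (𝒟.D α))).symm
  have hscb' : ∀ z : A, (𝒟.D (𝒟.D α)) * ((𝒟.D α) * z) = (𝒟.D α) * ((𝒟.D (𝒟.D α)) * z) := fun z => by rw [← mul_assoc, hscb, mul_assoc]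
  have hsda : (𝒟.D (𝒟.D (𝒟.D α))) * (α) = (α) * (𝒟.D (𝒟.D (𝒟.D α))) := S.even_comm hmd (α)
  have hsda' : ∀ z : A, (𝒟.D (𝒟.D (𝒟.D α))) * ((α) * z) = (α) * ((𝒟.D (𝒟.D (𝒟.D α))) * z) := fun z => by rw [← mul_assoc, hsda, mul_assoc]
  have hsdb : (𝒟.D (𝒟.D (𝒟.D α))) * (𝒟.D α) = (𝒟.D α) * (𝒟.D (𝒟.D (𝒟.D α))) := S.even_comm hmd (𝒟.D α)
  have hsdb' : ∀ z : A, (𝒟.D (𝒟.D (𝒟.D α))) * ((𝒟.D α) * z) = (𝒟.D α) * ((𝒟.D (𝒟.D (𝒟.D α))) * z) := fun z => by rw [← mul_assoc, hsdb, mul_assoc]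
  have hsdc : (𝒟.D (𝒟.D (𝒟.D α))) * (𝒟.D (𝒟.D α)) = (𝒟.D (𝒟.D α)) * (𝒟.D (𝒟.D (𝒟.D α))) := S.even_comm hmd (𝒟.D (𝒟.D α))
  have hsdc' : ∀ z : A, (𝒟.D (𝒟.D (𝒟.D α))) * ((𝒟.D (𝒟.D α)) * z) = (𝒟.D (𝒟.D α)) * ((𝒟.D (𝒟.D (𝒟.D α))) * z) := fun z => by rw [← mul_assoc, hsdc, mul_assoc]
  have hsea : (𝒟.D (𝒟.D (𝒟.D (𝒟.D α)))) * (α) = -((α) * (𝒟.D (𝒟.D (𝒟.D (𝒟.D α))))) := S.odd_anticomm hme hα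
  have hsea' : ∀ z : A, (𝒟.D (𝒟.D (𝒟.D (𝒟.D α)))) * ((α) * z) = -((α) * ((𝒟.D (𝒟.D (𝒟.D (𝒟.D α)))) * z)) := fun z => by rw [← mul_assoc, hsea, neg_mul, mul_assoc]
  have hseb : (𝒟.D (𝒟.D (𝒟.D (𝒟.D α)))) * (𝒟.D α) = (𝒟.D α) * (𝒟.D (𝒟.D (𝒟.D (𝒟.D α)))) := (S.even_comm hmb (𝒟.D (𝒟.D (𝒟.D (𝒟.D α))))).symm
  have hseb' : ∀ z : A, (𝒟.D (𝒟.D (𝒟.D (𝒟.D α)))) * ((𝒟.D α) * z) = (𝒟.D α) * ((𝒟.D (𝒟.D (𝒟.D (𝒟.D α)))) * z) := fun z => by rw [← mul_assoc, hseb, mul_assoc]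
  have hsec : (𝒟.D (𝒟.D (𝒟.D (𝒟.D α)))) * (𝒟.D (𝒟.D α)) = -((𝒟.D (𝒟.D α)) * (𝒟.D (𝒟.D (𝒟.D (𝒟.D α))))) := S.odd_anticomm hme hmc
  have hsec' : ∀ z : A, (𝒟.D (𝒟.D (𝒟.D (𝒟.D α)))) * ((𝒟.D (𝒟.D α)) * z) = -((𝒟.D (𝒟.D α)) * ((𝒟.D (𝒟.D (𝒟.D (𝒟.D α)))) * z)) := fun z => by rw [← mul_assoc, hsec, neg_mul, mul_assoc]
  have hsed : (𝒟.D (𝒟.D (𝒟.D (𝒟.D α)))) * (𝒟.D (𝒟.D (𝒟.D α))) = (𝒟.D (𝒟.D (𝒟.D α))) * (𝒟.D (𝒟.D (𝒟.D (𝒟.D α)))) := (S.even_comm hmd (𝒟.D (𝒟.D (𝒟.D (𝒟.D α))))).symm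
  have hsed' : ∀ z : A, (𝒟.D (𝒟.D (𝒟.D (𝒟.D α)))) * ((𝒟.D (𝒟.D (𝒟.D α))) * z) = (𝒟.D (𝒟.D (𝒟.D α))) * ((𝒟.D (𝒟.D (𝒟.D (𝒟.D α)))) * z) := fun z => by rw [← mul_assoc, hsed, mul_assoc]
  have hsfa : (𝒟.D (𝒟.D (𝒟.D (𝒟.D (𝒟.D α))))) * (α) = (α) * (𝒟.D (𝒟.D (𝒟.D (𝒟.D (𝒟.D α))))) := S.even_comm hmf (α)
  have hsfa' : ∀ z : A, (𝒟.D (𝒟.D (𝒟.D (𝒟.D (𝒟.D α))))) * ((α) * z) = (α) * ((𝒟.D (𝒟.D (𝒟.D (𝒟.D (𝒟.D α))))) * z) := fun z => by rw [← mul_assoc, hsfa, mul_assoc]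
  have hsfb : (𝒟.D (𝒟.D (𝒟.D (𝒟.D (𝒟.D α))))) * (𝒟.D α) = (𝒟.D α) * (𝒟.D (𝒟.D (𝒟.D (𝒟.D (𝒟.D α))))) := S.even_comm hmf (𝒟.D α)
  have hsfb' : ∀ z : A, (𝒟.D (𝒟.D (𝒟.D (𝒟.D (𝒟.D α))))) * ((𝒟.D α) * z) = (𝒟.D α) * ((𝒟.D (𝒟.D (𝒟.D (𝒟.D (𝒟.D α))))) * z) := fun z => by rw [← mul_assoc, hsfb, mul_assoc]
  have hsfc : (𝒟.D (𝒟.D (𝒟.D (𝒟.D (𝒟.D α))))) * (𝒟.D (𝒟.D α)) = (𝒟.D (𝒟.D α)) * (𝒟.D (𝒟.D (𝒟.D (𝒟.D (𝒟.D α))))) := S.even_comm hmf (𝒟.D (𝒟.D α))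
  have hsfc' : ∀ z : A, (𝒟.D (𝒟.D (𝒟.D (𝒟.D (𝒟.D α))))) * ((𝒟.D (𝒟.D α)) * z) = (𝒟.D (𝒟.D α)) * ((𝒟.D (𝒟.D (𝒟.D (𝒟.D (𝒟.D α))))) * z) := fun z => by rw [← mul_assoc, hsfc, mul_assoc]
  have hsfd : (𝒟.D (𝒟.D (𝒟.D (𝒟.D (𝒟.D α))))) * (𝒟.D (𝒟.D (𝒟.D α))) = (𝒟.D (𝒟.D (𝒟.D α))) * (𝒟.D (𝒟.D (𝒟.D (𝒟.D (𝒟.D α))))) := S.even_comm hmf (𝒟.D (𝒟.D (𝒟.D α)))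
  have hsfd' : ∀ z : A, (𝒟.D (𝒟.D (𝒟.D (𝒟.D (𝒟.D α))))) * ((𝒟.D (𝒟.D (𝒟.D α))) * z) = (𝒟.D (𝒟.D (𝒟.D α))) * ((𝒟.D (𝒟.D (𝒟.D (𝒟.D (𝒟.D α))))) * z) := fun z => by rw [← mul_assoc, hsfd, mul_assoc]
  have hsfe : (𝒟.D (𝒟.D (𝒟.D (𝒟.D (𝒟.D α))))) * (𝒟.D (𝒟.D (𝒟.D (𝒟.D α)))) = (𝒟.D (𝒟.D (𝒟.D (𝒟.D α)))) * (𝒟.D (𝒟.D (𝒟.D (𝒟.D (𝒟.D α))))) := S.even_comm hmf (𝒟.D (𝒟.D (𝒟.D (𝒟.D α))))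
  have hsfe' : ∀ z : A, (𝒟.D (𝒟.D (𝒟.D (𝒟.D (𝒟.D α))))) * ((𝒟.D (𝒟.D (𝒟.D (𝒟.D α)))) * z) = (𝒟.D (𝒟.D (𝒟.D (𝒟.D α)))) * ((𝒟.D (𝒟.D (𝒟.D (𝒟.D (𝒟.D α))))) * z) := fun z => by rw [← mul_assoc, hsfe, mul_assoc]
  have hsga : (𝒟.D (𝒟.D (𝒟.D (𝒟.D (𝒟.D (𝒟.D α)))))) * (α) = -((α) * (𝒟.D (𝒟.D (𝒟.D (𝒟.D (𝒟.D (𝒟.D α))))))) := S.odd_anticomm hmg hα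
  have hsga' : ∀ z : A, (𝒟.D (𝒟.D (𝒟.D (𝒟.D (𝒟.D (𝒟.D α)))))) * ((α) * z) = -((α) * ((𝒟.D (𝒟.D (𝒟.D (𝒟.D (𝒟.D (𝒟.D α)))))) * z)) := fun z => by rw [← mul_assoc, hsga, neg_mul, mul_assoc]
  have hsgb : (𝒟.D (𝒟.D (𝒟.D (𝒟.D (𝒟.D (𝒟.D α)))))) * (𝒟.D α) = (𝒟.D α) * (𝒟.D (𝒟.D (𝒟.D (𝒟.D (𝒟.D (𝒟.D α)))))) := (S.even_comm hmb (𝒟.D (𝒟.D (𝒟.D (𝒟.D (𝒟.D (𝒟.D α))))))).symm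
  have hsgb' : ∀ z : A, (𝒟.D (𝒟.D (𝒟.D (𝒟.D (𝒟.D (𝒟.D α)))))) * ((𝒟.D α) * z) = (𝒟.D α) * ((𝒟.D (𝒟.D (𝒟.D (𝒟.D (𝒟.D (𝒟.D α)))))) * z) := fun z => by rw [← mul_assoc, hsgb, mul_assoc]
  have hsgc : (𝒟.D (𝒟.D (𝒟.D (𝒟.D (𝒟.D (𝒟.D α)))))) * (𝒟.D (𝒟.D α)) = -((𝒟.D (𝒟.D α)) * (𝒟.D (𝒟.D (𝒟.D (𝒟.D (𝒟.D (𝒟.D α))))))) := S.odd_anticomm hmg hmc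
  have hsgc' : ∀ z : A, (𝒟.D (𝒟.D (𝒟.D (𝒟.D (𝒟.D (𝒟.D α)))))) * ((𝒟.D (𝒟.D α)) * z) = -((𝒟.D (𝒟.D α)) * ((𝒟.D (𝒟.D (𝒟.D (𝒟.D (𝒟.D (𝒟.D α)))))) * z)) := fun z => by rw [← mul_assoc, hsgc, neg_mul, mul_assoc]
  have hsgd : (𝒟.D (𝒟.D (𝒟.D (𝒟.D (𝒟.D (𝒟.D α)))))) * (𝒟.D (𝒟.D (𝒟.D α))) = (𝒟.D (𝒟.D (𝒟.D α))) * (𝒟.D (𝒟.D (𝒟.D (𝒟.D (𝒟.D (𝒟.D α)))))) := (S.even_comm hmd (𝒟.D (𝒟.D (𝒟.D (𝒟.D (𝒟.D (𝒟.D α))))))).symm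
  have hsgd' : ∀ z : A, (𝒟.D (𝒟.D (𝒟.D (𝒟.D (𝒟.D (𝒟.D α)))))) * ((𝒟.D (𝒟.D (𝒟.D α))) * z) = (𝒟.D (𝒟.D (𝒟.D α))) * ((𝒟.D (𝒟.D (𝒟.D (𝒟.D (𝒟.D (𝒟.D α)))))) * z) := fun z => by rw [← mul_assoc, hsgd, mul_assoc]
  have hsge : (𝒟.D (𝒟.D (𝒟.D (𝒟.D (𝒟.D (𝒟.D α)))))) * (𝒟.D (𝒟.D (𝒟.D (𝒟.D α)))) = -((𝒟.D (𝒟.D (𝒟.D (𝒟.D α)))) * (𝒟.D (𝒟.D (𝒟.D (𝒟.D (𝒟.D (𝒟.D α))))))) := S.odd_anticomm hmg hme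
  have hsge' : ∀ z : A, (𝒟.D (𝒟.D (𝒟.D (𝒟.D (𝒟.D (𝒟.D α)))))) * ((𝒟.D (𝒟.D (𝒟.D (𝒟.D α)))) * z) = -((𝒟.D (𝒟.D (𝒟.D (𝒟.D α)))) * ((𝒟.D (𝒟.D (𝒟.D (𝒟.D (𝒟.D (𝒟.D α)))))) * z)) := fun z => by rw [← mul_assoc, hsge, neg_mul, mul_assoc]
  have hsgf : (𝒟.D (𝒟.D (𝒟.D (𝒟.D (𝒟.D (𝒟.D α)))))) * (𝒟.D (𝒟.D (𝒟.D (𝒟.D (𝒟.D α))))) = (𝒟.D (𝒟.D (𝒟.D (𝒟.D (𝒟.D α))))) * (𝒟.D (𝒟.D (𝒟.D (𝒟.D (𝒟.D (𝒟.D α)))))) := (S.even_comm hmf (𝒟.D (𝒟.D (𝒟.D (𝒟.D (𝒟.D (𝒟.D α))))))).symm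
  have hsgf' : ∀ z : A, (𝒟.D (𝒟.D (𝒟.D (𝒟.D (𝒟.D (𝒟.D α)))))) * ((𝒟.D (𝒟.D (𝒟.D (𝒟.D (𝒟.D α))))) * z) = (𝒟.D (𝒟.D (𝒟.D (𝒟.D (𝒟.D α))))) * ((𝒟.D (𝒟.D (𝒟.D (𝒟.D (𝒟.D (𝒟.D α)))))) * z) := fun z => by rw [← mul_assoc, hsgf, mul_assoc]
  have hqa : (α) * (α) = 0 := half _ (eq_neg_iff_add_eq_zero.mp (S.odd_anticomm hα hα))
  have hqa' : ∀ z : A, (α) * ((α) * z) = 0 := fun z => by rw [← mul_assoc, hqa, zero_mul]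
  have hqc : (𝒟.D (𝒟.D α)) * (𝒟.D (𝒟.D α)) = 0 := half _ (eq_neg_iff_add_eq_zero.mp (S.odd_anticomm hmc hmc))
  have hqc' : ∀ z : A, (𝒟.D (𝒟.D α)) * ((𝒟.D (𝒟.D α)) * z) = 0 := fun z => by rw [← mul_assoc, hqc, zero_mul]
  have hqe : (𝒟.D (𝒟.D (𝒟.D (𝒟.D α)))) * (𝒟.D (𝒟.D (𝒟.D (𝒟.D α)))) = 0 := half _ (eq_neg_iff_add_eq_zero.mp (S.odd_anticomm hme hme))
  have hqe' : ∀ z : A, (𝒟.D (𝒟.D (𝒟.D (𝒟.D α)))) * ((𝒟.D (𝒟.D (𝒟.D (𝒟.D α)))) * z) = 0 := fun z => by rw [← mul_assoc, hqe, zero_mul]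
  have hqg : (𝒟.D (𝒟.D (𝒟.D (𝒟.D (𝒟.D (𝒟.D α)))))) * (𝒟.D (𝒟.D (𝒟.D (𝒟.D (𝒟.D (𝒟.D α)))))) = 0 := half _ (eq_neg_iff_add_eq_zero.mp (S.odd_anticomm hmg hmg))
  have hqg' : ∀ z : A, (𝒟.D (𝒟.D (𝒟.D (𝒟.D (𝒟.D (𝒟.D α)))))) * ((𝒟.D (𝒟.D (𝒟.D (𝒟.D (𝒟.D (𝒟.D α)))))) * z) = 0 := fun z => by rw [← mul_assoc, hqg, zero_mul]
  have hLa : ∀ z : A, 𝒟.D ((α) * z) = (𝒟.D α) * z - (α) * 𝒟.D z := 𝒟.leibniz_odd hα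
  have hLb : ∀ z : A, 𝒟.D ((𝒟.D α) * z) = (𝒟.D (𝒟.D α)) * z + (𝒟.D α) * 𝒟.D z := 𝒟.leibniz_even hmb
  have hLc : ∀ z : A, 𝒟.D ((𝒟.D (𝒟.D α)) * z) = (𝒟.D (𝒟.D (𝒟.D α))) * z - (𝒟.D (𝒟.D α)) * 𝒟.D z := 𝒟.leibniz_odd hmc
  have hLd : ∀ z : A, 𝒟.D ((𝒟.D (𝒟.D (𝒟.D α))) * z) = (𝒟.D (𝒟.D (𝒟.D (𝒟.D α)))) * z + (𝒟.D (𝒟.D (𝒟.D α))) * 𝒟.D z := 𝒟.leibniz_even hmd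
  have hLe : ∀ z : A, 𝒟.D ((𝒟.D (𝒟.D (𝒟.D (𝒟.D α)))) * z) = (𝒟.D (𝒟.D (𝒟.D (𝒟.D (𝒟.D α))))) * z - (𝒟.D (𝒟.D (𝒟.D (𝒟.D α)))) * 𝒟.D z := 𝒟.leibniz_odd hme

  have hm3 : ∀ z : A, (3:A) * z = z + z + z := fun z => by
    rw [show (3:A) = 1 + 1 + 1 from by norm_num, add_mul, add_mul, one_mul]
  have hkey : (Lpoly α α).map (cwise fun a => 𝒯.D a)
        - (PmKdV (fun a => 𝒟.D a) α).map (cwise fun a => 𝒟.D a)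
        + Lpoly α α * PmKdV (fun a => 𝒟.D a) α
        - sdag (PmKdV (fun a => 𝒟.D a) α) * Lpoly α α
      = Matrix.of ![![0, C (𝒯.D α - (𝒟.D (𝒟.D (𝒟.D (𝒟.D (𝒟.D (𝒟.D α))))) - 3 * α * (𝒟.D α) * (𝒟.D (𝒟.D (𝒟.D α))) - 3 * (𝒟.D α) ^ 2 * (𝒟.D (𝒟.D α)))), 0], ![C (𝒯.D α - (𝒟.D (𝒟.D (𝒟.D (𝒟.D (𝒟.D (𝒟.D α))))) - 3 * α * (𝒟.D α) * (𝒟.D (𝒟.D (𝒟.D α))) - 3 * (𝒟.D α) ^ 2 * (𝒟.D (𝒟.D α)))), 0, 0], ![0, 0, 0]] := by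
    ext i j : 2
    rw [Matrix.sub_apply, Matrix.add_apply, Matrix.sub_apply]
    fin_cases i <;> fin_cases j <;>
      (rename_i n
       simp only [Lpoly, Lgen, PmKdV, sdag, Matrix.map_apply, Matrix.mul_apply,
         Fin.sum_univ_three, Matrix.of_apply, Fin.zero_eta, Fin.mk_one, Fin.reduceFinMk,
         Matrix.cons_val', Matrix.cons_val_zero, Matrix.cons_val_one, Matrix.head_cons,
         Matrix.empty_val', Matrix.cons_val_fin_one, Matrix.head_fin_const,
         Matrix.cons_val_two, Matrix.tail_cons, Fin.isValue, ne_eq]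
       simp only [if_true, if_false, reduceIte, mul_zero, zero_mul, mul_one, one_mul,
         add_zero, zero_add, sub_zero, zero_sub, neg_zero, mul_add, mul_sub, add_mul, sub_mul,
         mul_neg, neg_mul, neg_neg, X_pow_eq_monomial, ← Polynomial.monomial_zero_left,
         Polynomial.monomial_mul_monomial, X_mul_monomial', monomial_mul_X',
         cwise_add, cwise_sub, cwise_neg, cwise_monomial, cwise_Xq, cwise_zero]
       simp only [Fin.reduceEq, not_true, not_false_eq_true, and_true, and_false, true_and,
         false_and, or_false, false_or, true_or, or_true, if_true, if_false, reduceIte,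
         mul_zero, zero_mul, add_zero, zero_add, sub_zero, zero_sub, neg_neg, mul_add, mul_sub,
         add_mul, sub_mul, mul_neg, neg_mul, Polynomial.monomial_mul_monomial, X_mul_monomial',
         monomial_mul_X', ← Polynomial.monomial_zero_left]
       simp only [Polynomial.coeff_add, Polynomial.coeff_sub, Polynomial.coeff_neg,
         Polynomial.coeff_monomial, Polynomial.coeff_zero]
       rcases n with _|_|_|_|_|_|_|_|n <;> (try norm_num)
       all_goals (try simp only [hsba, hsba', hsca, hsca', hscb, hscb', hsda, hsda', hsdb, hsdb', hsdc, hsdc', hsea, hsea', hseb, hseb', hsec, hsec', hsed, hsed', hsfa, hsfa', hsfb, hsfb', hsfc, hsfc', hsfd, hsfd', hsfe, hsfe', hsga, hsga', hsgb, hsgb', hsgc, hsgc', hsgd, hsgd', hsge, hsge', hsgf, hsgf', hqa, hqa', hqc, hqc', hqe, hqe', hqg, hqg', hLa, hLb, hLc, hLd, hLe, hD1, hT1, hD2, hD3, map_add, map_sub, map_neg, pow_succ, pow_zero, one_mul, mul_one, mul_assoc, mul_add, mul_sub, add_mul, sub_mul, mul_neg, neg_mul, neg_neg, mul_zero, zero_mul,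 add_zero, zero_add, sub_zero, zero_sub, two_mul, hm3])
       all_goals (first | noncomm_ring | abel))
  constructor
  · intro h
    rw [hkey] at h
    have h01 : (Matrix.of ![![0, C (𝒯.D α - (𝒟.D (𝒟.D (𝒟.D (𝒟.D (𝒟.D (𝒟.D α))))) - 3 * α * (𝒟.D α) * (𝒟.D (𝒟.D (𝒟.D α))) - 3 * (𝒟.D α) ^ 2 * (𝒟.D (𝒟.D α)))), 0],
        ![C (𝒯.D α - (𝒟.D (𝒟.D (𝒟.D (𝒟.D (𝒟.D (𝒟.D α))))) - 3 * α * (𝒟.D α) * (𝒟.D (𝒟.D (𝒟.D α))) - 3 * (𝒟.D α) ^ 2 * (𝒟.D (𝒟.D α)))), 0, 0], ![0, 0, 0]] : Matrix (Fin 3) (Fin 3) A[X]) 0 1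
        = (0 : Matrix (Fin 3) (Fin 3) A[X]) 0 1 := by rw [h]
    simp only [Matrix.of_apply, Matrix.cons_val', Matrix.cons_val_zero, Matrix.cons_val_one,
      Matrix.head_cons, Matrix.empty_val', Matrix.cons_val_fin_one, Matrix.zero_apply] at h01
    exact sub_eq_zero.mp (Polynomial.C_eq_zero.mp h01)
  · intro h
    rw [hkey]
    ext i j : 2
    fin_cases i <;> fin_cases j <;>
      simp [h, Matrix.of_apply, sub_self, Matrix.vecHead, Matrix.vecTail]
end

section
/- (Elementary Darboux transformation eDT-II.) Let α, β, α₂, β₂ ∈ A₁ and let p₂ ∈ A₀ with Dp₂ = 0. Then the Darboux covariance condition (D E₂(λ, p₂; α₂, β)) + E₂(λ, p₂; α₂, β)†·L(λ; α, β) − L(λ; α₂, β₂)·E₂(λ, p₂; α₂, β) = 0 holds identically in λ if and only if the elementary Bäcklund transformation holds: α₂,ₓ = α(α₂β − 1) + α₂((Dα₂)(Dβ) − p₂²) and β₂ = β_x(1 + α₂β) + β((Dα₂)(Dβ) − p₂²). -/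
open Polynomial Matrix

/-- The elementary Darboux matrix `E₁(λ, p; a, b)` (the gauge matrix of eDT-I), with
`da, db` standing for `Da, Db`. -/
def E1gen {R : Type*} [Ring R] (lam p a b da db : R) : Matrix (Fin 3) (Fin 3) R :=
  !![lam ^ 2 + (1 + a * b) * (da * db - p ^ 2), -da, lam * a;
     -db, 1 - a * b, 0;
     -(lam * b), 0, 1]

/-- The elementary Darboux matrix `E₂(λ, p; a, b)` (the gauge matrix of eDT-II). -/
def E2gen {R : Type*} [Ring R] (lam p a b da db : R) : Matrix (Fin 3) (Fin 3) R :=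
  !![1 - a * b, da, -(lam * a);
     db, (1 + a * b) * (lam ^ 2 - p ^ 2 + da * db), -(lam * (a * db));
     lam * b, lam * (b * da), lam ^ 2 * (1 + a * b) - p ^ 2]

/-- `E₁(λ, p; a, b)` with entries polynomial in `λ = X`. -/
noncomputable def E1poly {A : Type*} [Ring A] (D : A → A) (p a b : A) :
    Matrix (Fin 3) (Fin 3) (Polynomial A) :=
  E1gen (X : Polynomial A) (C p) (C a) (C b) (C (D a)) (C (D b))

/-- `E₂(λ, p; a, b)` with entries polynomial in `λ = X`. -/
noncomputable def E2poly {A : Type*} [Ring A] (D : A → A) (p a b : A) :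
    Matrix (Fin 3) (Fin 3) (Polynomial A) :=
  E2gen (X : Polynomial A) (C p) (C a) (C b) (C (D a)) (C (D b))

/-
Extending the odd derivation coefficientwise turns `A[λ]` into a superalgebra in which `λ` is an
even `D`-constant, so it suffices to compute the covariance matrix in an arbitrary superalgebra at
an even `D`-constant `λ`. There, using only that even elements are central and that odd elements
anticommute, every entry is a combination of the two Bäcklund residuals: the `(1,2)` entry is the
`α₂`-residual, the `(2,1)` entry is minus the `β₂`-residual times `1 - α₂β`, which is a unit since
`(α₂β)² = 0`, and all other entries vanish once both residuals do.
-/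

namespace SuperAlgebra
variable {R : Type*} [Ring R] [Algebra ℂ R] (S : SuperAlgebra R)

theorem one_mem_A0 : (1 : R) ∈ S.A0 := by simpa using S.algebraMap_mem 1

theorem sq_mem_A0 {x : R} (hx : x ∈ S.A0) : x ^ 2 ∈ S.A0 := by
  rw [sq]; exact S.mul_mem00 hx hx

theorem mul_self_eq_zero {x : R} (hx : x ∈ S.A1) : x * x = 0 := by
  have h : (2 : ℂ) • (x * x) = 0 := by
    rw [two_smul]; nth_rw 1 [S.odd_anticomm hx hx]; exact neg_add_cancel _
  exact (smul_eq_zero.mp h).resolve_left two_ne_zero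

theorem mul_mul_self_eq_zero {x y : R} (hx : x ∈ S.A1) (hy : y ∈ S.A1) :
    x * y * (x * y) = 0 := by
  linear_combination (norm := noncomm_ring)
    x * S.odd_anticomm hy hx * y - S.mul_self_eq_zero hx * y * y

end SuperAlgebra

namespace OddDerivation
variable {R : Type*} [Ring R] [Algebra ℂ R] {S : SuperAlgebra R} (𝒟 : OddDerivation S)

theorem map_one : 𝒟.D 1 = 0 := by
  simpa using (𝒟.leibniz_even S.one_mem_A0 1).symm

theorem map_const_mul {c : R} (hc : c ∈ S.A0) (hDc : 𝒟.D c = 0) (x : R) :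
    𝒟.D (c * x) = c * 𝒟.D x := by
  rw [𝒟.leibniz_even hc, hDc, zero_mul, zero_add]

theorem map_const_sq {c : R} (hc : c ∈ S.A0) (hDc : 𝒟.D c = 0) : 𝒟.D (c ^ 2) = 0 := by
  rw [sq, 𝒟.map_const_mul hc hDc, hDc, mul_zero]

end OddDerivation

section Polynomial

section Cwise
variable {A : Type*} [Ring A]

theorem coeff_cwise {f : A → A} (hf : f 0 = 0) (P : A[X]) (n : ℕ) :
    (cwise f P).coeff n = f (P.coeff n) := by
  rw [cwise, Polynomial.sum_def, finsetSum_coeff]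
  simp only [coeff_monomial, Finset.sum_ite_eq']
  split_ifs with h
  · rfl
  · rw [notMem_support_iff.mp h, hf]

theorem cwise_C {f : A → A} (hf : f 0 = 0) (a : A) : cwise f (C a) = C (f a) := by
  ext n; rw [coeff_cwise hf, coeff_C, coeff_C]; split_ifs <;> simp [hf]

end Cwise

variable {A : Type*} [Ring A] [Algebra ℂ A]

def Submodule.polynomial (M : Submodule ℂ A) : Submodule ℂ A[X] where
  carrier := {P | ∀ n, P.coeff n ∈ M}
  add_mem' hP hQ n := by rw [coeff_add]; exact M.add_mem (hP n) (hQ n)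
  zero_mem' n := by rw [coeff_zero]; exact M.zero_mem
  smul_mem' c P hP n := by rw [coeff_smul]; exact M.smul_mem c (hP n)

theorem Submodule.monomial_mem_polynomial {M : Submodule ℂ A} {a : A} (ha : a ∈ M) (n : ℕ) :
    monomial n a ∈ M.polynomial := fun m => by
  rw [coeff_monomial]; split_ifs
  exacts [ha, M.zero_mem]

theorem Submodule.C_mem_polynomial {M : Submodule ℂ A} {a : A} (ha : a ∈ M) :
    C a ∈ M.polynomial :=
  monomial_mem_polynomial ha 0

theorem Submodule.mul_mem_polynomial {M N K : Submodule ℂ A}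
    (h : ∀ {a b : A}, a ∈ M → b ∈ N → a * b ∈ K) {P Q : A[X]}
    (hP : P ∈ M.polynomial) (hQ : Q ∈ N.polynomial) : P * Q ∈ K.polynomial := fun n => by
  rw [coeff_mul]
  exact K.sum_mem fun x _ => h (hP x.1) (hQ x.2)

theorem Submodule.isCompl_polynomial {M N : Submodule ℂ A} (h : IsCompl M N) :
    IsCompl M.polynomial N.polynomial := by
  constructor
  · rw [Submodule.disjoint_def]
    intro P hM hN
    ext n
    exact (Submodule.disjoint_def.mp h.disjoint) _ (hM n) (hN n)
  · rw [codisjoint_iff, eq_top_iff]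
    rintro P -
    induction P using Polynomial.induction_on' with
    | add P Q hP hQ => exact Submodule.add_mem _ hP hQ
    | monomial n a =>
      obtain ⟨b, hb, c, hc, rfl⟩ :=
        Submodule.mem_sup.mp (h.sup_eq_top ▸ Submodule.mem_top (x := a))
      rw [(monomial n).map_add]
      exact Submodule.add_mem_sup (monomial_mem_polynomial hb n) (monomial_mem_polynomial hc n)

def SuperAlgebra.polynomial (S : SuperAlgebra A) : SuperAlgebra A[X] where
  A0 := S.A0.polynomial
  A1 := S.A1.polynomial
  isCompl := Submodule.isCompl_polynomial S.isCompl
  algebraMap_mem c := by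
    rw [Polynomial.algebraMap_apply]; exact Submodule.C_mem_polynomial (S.algebraMap_mem c)
  mul_mem00 := Submodule.mul_mem_polynomial S.mul_mem00
  mul_mem01 := Submodule.mul_mem_polynomial S.mul_mem01
  mul_mem10 := Submodule.mul_mem_polynomial S.mul_mem10
  mul_mem11 := Submodule.mul_mem_polynomial S.mul_mem11
  even_comm hP Q := by
    ext n
    rw [coeff_mul, coeff_mul, ← Finset.Nat.sum_antidiagonal_swap]
    exact Finset.sum_congr rfl fun x _ => S.even_comm (hP x.2) _
  odd_anticomm hP hQ := by
    ext n
    rw [coeff_neg, coeff_mul, coeff_mul, ← Finset.Nat.sum_antidiagonal_swap,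
      ← Finset.sum_neg_distrib]
    exact Finset.sum_congr rfl fun x _ => S.odd_anticomm (hP x.2) (hQ x.1)

noncomputable def OddDerivation.polynomial {S : SuperAlgebra A} (𝒟 : OddDerivation S) :
    OddDerivation S.polynomial where
  D :=
    { toFun := cwise 𝒟.D
      map_add' P Q := by ext n; simp only [coeff_add, coeff_cwise 𝒟.D.map_zero, map_add]
      map_smul' c P := by ext n; simp only [coeff_smul, coeff_cwise 𝒟.D.map_zero, map_smul,
        RingHom.id_apply] }
  map_even hP n := by
    rw [LinearMap.coe_mk, AddHom.coe_mk, coeff_cwise 𝒟.D.map_zero]; exact 𝒟.map_even (hP n)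
  map_odd hP n := by
    rw [LinearMap.coe_mk, AddHom.coe_mk, coeff_cwise 𝒟.D.map_zero]; exact 𝒟.map_odd (hP n)
  leibniz_even hP Q := by
    ext n
    simp only [LinearMap.coe_mk, AddHom.coe_mk, coeff_add, coeff_mul, coeff_cwise 𝒟.D.map_zero,
      map_sum, ← Finset.sum_add_distrib]
    exact Finset.sum_congr rfl fun x _ => 𝒟.leibniz_even (hP x.1) _
  leibniz_odd hP Q := by
    ext n
    simp only [LinearMap.coe_mk, AddHom.coe_mk, coeff_sub, coeff_mul, coeff_cwise 𝒟.D.map_zero,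
      map_sum, ← Finset.sum_sub_distrib]
    exact Finset.sum_congr rfl fun x _ => 𝒟.leibniz_odd (hP x.1) _

variable {S : SuperAlgebra A} (𝒟 : OddDerivation S)

theorem SuperAlgebra.X_mem_polynomial_A0 : (X : A[X]) ∈ S.polynomial.A0 :=
  Submodule.monomial_mem_polynomial S.one_mem_A0 1

theorem OddDerivation.polynomial_C (a : A) : 𝒟.polynomial.D (C a) = C (𝒟.D a) :=
  cwise_C 𝒟.D.map_zero a

theorem OddDerivation.polynomial_X : 𝒟.polynomial.D X = 0 := by
  ext n
  rw [coeff_zero, OddDerivation.polynomial, LinearMap.coe_mk, AddHom.coe_mk,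
    coeff_cwise 𝒟.D.map_zero, coeff_X]
  split_ifs
  exacts [𝒟.map_one, 𝒟.D.map_zero]

end Polynomial

theorem sdag_fin_three {R : Type*} [Ring R] (a b c d e f g h i : R) :
    sdag !![a, b, c; d, e, f; g, h, i] = !![a, b, -c; d, e, -f; -g, -h, i] := by
  ext i j
  fin_cases i <;> fin_cases j <;> simp [sdag]

section Covariance
variable {R : Type*} [Ring R] [Algebra ℂ R] {S : SuperAlgebra R} (𝒟 : OddDerivation S)

theorem E2gen_map_derivation {lam p a b : R} (hlam : lam ∈ S.A0) (hDlam : 𝒟.D lam = 0)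
    (hp : p ∈ S.A0) (hDp : 𝒟.D p = 0) (ha : a ∈ S.A1) (hb : b ∈ S.A1) :
    (E2gen lam p a b (𝒟.D a) (𝒟.D b)).map 𝒟.D =
      !![a * 𝒟.D b - 𝒟.D a * b, 𝒟.D (𝒟.D a), -(lam * 𝒟.D a);
         𝒟.D (𝒟.D b), (𝒟.D a * b - a * 𝒟.D b) * (lam ^ 2 - p ^ 2 + 𝒟.D a * 𝒟.D b)
            + (1 + a * b) * (𝒟.D (𝒟.D a) * 𝒟.D b + 𝒟.D a * 𝒟.D (𝒟.D b)),
          -(lam * (𝒟.D a * 𝒟.D b - a * 𝒟.D (𝒟.D b)));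
         lam * 𝒟.D b, lam * (𝒟.D b * 𝒟.D a - b * 𝒟.D (𝒟.D a)),
          lam ^ 2 * (𝒟.D a * b - a * 𝒟.D b)] := by
  have hab : 1 + a * b ∈ S.A0 := S.A0.add_mem S.one_mem_A0 (S.mul_mem11 ha hb)
  ext i j
  fin_cases i <;> fin_cases j <;>
    simp [E2gen, 𝒟.leibniz_odd ha, 𝒟.leibniz_odd hb, 𝒟.leibniz_even hab,
      𝒟.leibniz_even (𝒟.map_odd ha), 𝒟.map_const_mul hlam hDlam, 𝒟.map_one,
      𝒟.map_const_mul (S.sq_mem_A0 hlam) (𝒟.map_const_sq hlam hDlam), 𝒟.map_const_sq hlam hDlam,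
      𝒟.map_const_sq hp hDp]

def darbouxCovariance₂ (D : R → R) (lam p α β α₂ β₂ : R) : Matrix (Fin 3) (Fin 3) R :=
  (E2gen lam p α₂ β (D α₂) (D β)).map D + sdag (E2gen lam p α₂ β (D α₂) (D β)) * Lgen lam α β
    - Lgen lam α₂ β₂ * E2gen lam p α₂ β (D α₂) (D β)

def backlundResidualα (D : R → R) (p α β α₂ : R) : R :=
  D (D α₂) - (α * (α₂ * β - 1) + α₂ * (D α₂ * D β - p ^ 2))

def backlundResidualβ (D : R → R) (p β α₂ β₂ : R) : R :=
  β₂ - (D (D β) * (1 + α₂ * β) + β * (D α₂ * D β - p ^ 2))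

theorem darbouxCovariance₂_eq {lam p α β α₂ β₂ : R} (hlam : lam ∈ S.A0) (hDlam : 𝒟.D lam = 0)
    (hp : p ∈ S.A0) (hDp : 𝒟.D p = 0) (hβ : β ∈ S.A1) (hα₂ : α₂ ∈ S.A1) :
    darbouxCovariance₂ 𝒟.D lam p α β α₂ β₂ =
      !![0, backlundResidualα 𝒟.D p α β α₂, 0;
         -(backlundResidualβ 𝒟.D p β α₂ β₂ * (1 - α₂ * β)),
          (1 + α₂ * β) * backlundResidualα 𝒟.D p α β α₂ * 𝒟.D β
            - backlundResidualβ 𝒟.D p β α₂ β₂ * 𝒟.D α₂,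
          lam * (backlundResidualβ 𝒟.D p β α₂ β₂ * α₂);
         0, -(lam * (β * backlundResidualα 𝒟.D p α β α₂)), 0] := by
  have hA0 := 𝒟.map_odd hα₂
  have hB0 := 𝒟.map_odd hβ
  have hl := S.even_comm hlam
  have hA := S.even_comm hA0
  have hB := S.even_comm hB0
  have hu := S.even_comm (S.mul_mem11 hα₂ hβ)
  have hP := S.even_comm (S.A0.sub_mem (S.mul_mem00 hA0 hB0) (S.sq_mem_A0 hp))
  have hX := S.even_comm
    (S.A0.add_mem (S.A0.sub_mem (S.sq_mem_A0 hlam) (S.sq_mem_A0 hp)) (S.mul_mem00 hA0 hB0))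
  have haa := S.mul_self_eq_zero hα₂
  have hbb := S.mul_self_eq_zero hβ
  have hba := S.odd_anticomm hβ hα₂
  have hbxa := S.odd_anticomm (𝒟.map_even hB0) hα₂
  rw [darbouxCovariance₂, E2gen_map_derivation 𝒟 hlam hDlam hp hDp hα₂ hβ, E2gen, Lgen, Lgen,
    sdag_fin_three, mul_fin_three, mul_fin_three]
  simp only [of_add_of, of_sub_of, cons_add_cons, cons_sub_cons, empty_add_empty, empty_sub_empty]
  unfold backlundResidualα backlundResidualβ
  set a := α₂
  set b := β
  set A := 𝒟.D a
  set B := 𝒟.D b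
  refine congrArg Matrix.of (vec3_eq (vec3_eq ?_ ?_ ?_) (vec3_eq ?_ ?_ ?_) (vec3_eq ?_ ?_ ?_))
  · noncomm_ring
  · linear_combination (norm := noncomm_ring)
      -hu α + hl a * lam - haa * b * (lam ^ 2 - p ^ 2 + A * B)
  · linear_combination (norm := noncomm_ring) -hl A + lam * haa * B - hl a * a * B
  · linear_combination (norm := noncomm_ring)
      𝒟.D B * a * hba * b - 𝒟.D B * haa * b * b + hP b + a * b * hX b
        + a * hbb * (lam ^ 2 - p ^ 2 + A * B) + b * hP (a * b) + hba * b * (A * B - p ^ 2)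
        - a * hbb * (A * B - p ^ 2)
  · linear_combination (norm := noncomm_ring)
      hA (b * (lam ^ 2 - p ^ 2 + A * B)) - (lam * hl b + hl b * lam) * A + hl (a * B) * lam
        + hA (𝒟.D B) + hu (A * 𝒟.D B) + hA (𝒟.D B * a * b) + hB α - hu α * B + hu α * a * b * B
        + α * (a * hba * b - haa * b * b) * B + a * hP B + a * hba * (A * B - p ^ 2) * B
        - haa * b * (A * B - p ^ 2) * B
  · linear_combination (norm := noncomm_ring)
      -hl β₂ * a - hl (lam ^ 2 - p ^ 2 + A * B) + lam * hbxa + lam * 𝒟.D B * (a * hba - haa * b)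
        + lam * b * hP a + lam * hba * (A * B - p ^ 2) + hu ((lam ^ 2 - p ^ 2 + A * B) * lam)
        - hl (A * B - p ^ 2) * a * b + lam * hP (a * b)
  · linear_combination (norm := noncomm_ring) -(lam * b * hA b + lam * hbb * A)
  · linear_combination (norm := noncomm_ring)
      lam * hB A + hl (p ^ 2) + lam * hl (a * b) * lam - lam * hba * (A * B - p ^ 2)
        - lam * (hba * b - a * hbb) * α + lam * b * hu α
  · linear_combination (norm := noncomm_ring) lam * hl (A * b) + lam * hA b * lam

theorem darbouxCovariance₂_eq_zero_iff {lam p α β α₂ β₂ : R} (hlam : lam ∈ S.A0)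
    (hDlam : 𝒟.D lam = 0) (hp : p ∈ S.A0) (hDp : 𝒟.D p = 0) (hβ : β ∈ S.A1) (hα₂ : α₂ ∈ S.A1) :
    darbouxCovariance₂ 𝒟.D lam p α β α₂ β₂ = 0 ↔
      backlundResidualα 𝒟.D p α β α₂ = 0 ∧ backlundResidualβ 𝒟.D p β α₂ β₂ = 0 := by
  rw [darbouxCovariance₂_eq 𝒟 hlam hDlam hp hDp hβ hα₂]
  constructor
  · intro h
    have h01 : backlundResidualα 𝒟.D p α β α₂ = 0 := by simpa using congrFun (congrFun h 0) 1
    have h10 : backlundResidualβ 𝒟.D p β α₂ β₂ * (1 - α₂ * β) = 0 := by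
      simpa using congrFun (congrFun h 1) 0
    have hunit : (1 - α₂ * β) * (1 + α₂ * β) = 1 := by
      linear_combination (norm := noncomm_ring) -S.mul_mul_self_eq_zero hα₂ hβ
    refine ⟨h01, ?_⟩
    rw [← mul_one (backlundResidualβ _ _ _ _ _), ← hunit, ← mul_assoc, h10, zero_mul]
  · rintro ⟨h1, h2⟩
    rw [h1, h2]
    simpa using (Matrix.eta_fin_three (0 : Matrix (Fin 3) (Fin 3) R)).symm

end Covariance

section Polynomial
variable {A : Type*} [Ring A] [Algebra ℂ A] {S : SuperAlgebra A} (𝒟 : OddDerivation S)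

theorem darbouxCovariance₂_polynomial (p α β α₂ β₂ : A) :
    darbouxCovariance₂ 𝒟.polynomial.D X (C p) (C α) (C β) (C α₂) (C β₂) =
      (E2poly 𝒟.D p α₂ β).map (cwise 𝒟.D) + sdag (E2poly 𝒟.D p α₂ β) * Lpoly α β
        - Lpoly α₂ β₂ * E2poly 𝒟.D p α₂ β := by
  simp only [darbouxCovariance₂, OddDerivation.polynomial_C]
  rfl

theorem backlundResidualα_polynomial (p α β α₂ : A) :
    backlundResidualα 𝒟.polynomial.D (C p) (C α) (C β) (C α₂) =
      C (backlundResidualα 𝒟.D p α β α₂) := by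
  simp [backlundResidualα, OddDerivation.polynomial_C]

theorem backlundResidualβ_polynomial (p β α₂ β₂ : A) :
    backlundResidualβ 𝒟.polynomial.D (C p) (C β) (C α₂) (C β₂) =
      C (backlundResidualβ 𝒟.D p β α₂ β₂) := by
  simp [backlundResidualβ, OddDerivation.polynomial_C]

end Polynomial

theorem eDT2_covariance_iff_backlund_general {A : Type*} [Ring A] [Algebra ℂ A]
    (S : SuperAlgebra A) (𝒟 : OddDerivation S)
    (α β α₂ β₂ : A) (hβ : β ∈ S.A1) (hα₂ : α₂ ∈ S.A1)
    (p₂ : A) (hp₂ : p₂ ∈ S.A0) (hDp₂ : 𝒟.D p₂ = 0) :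
    ((E2poly (fun a => 𝒟.D a) p₂ α₂ β).map (cwise fun a => 𝒟.D a)
        + sdag (E2poly (fun a => 𝒟.D a) p₂ α₂ β) * Lpoly α β
        - Lpoly α₂ β₂ * E2poly (fun a => 𝒟.D a) p₂ α₂ β = 0)
      ↔ (𝒟.D (𝒟.D α₂) = α * (α₂ * β - 1) + α₂ * ((𝒟.D α₂) * (𝒟.D β) - p₂ ^ 2)
          ∧ β₂ = (𝒟.D (𝒟.D β)) * (1 + α₂ * β) + β * ((𝒟.D α₂) * (𝒟.D β) - p₂ ^ 2)) := by
  have hDCp₂ : 𝒟.polynomial.D (C p₂) = 0 := by rw [𝒟.polynomial_C, hDp₂, C_0]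
  rw [← darbouxCovariance₂_polynomial, darbouxCovariance₂_eq_zero_iff 𝒟.polynomial
      S.X_mem_polynomial_A0 𝒟.polynomial_X (Submodule.C_mem_polynomial hp₂) hDCp₂
      (Submodule.C_mem_polynomial hβ) (Submodule.C_mem_polynomial hα₂),
    backlundResidualα_polynomial, backlundResidualβ_polynomial, C_eq_zero, C_eq_zero,
    backlundResidualα, backlundResidualβ, sub_eq_zero, sub_eq_zero]

/-- **eDT-II.** The Darboux covariance condition
`(DE₂) + E₂†·L(λ; α, β) − L(λ; α₂, β₂)·E₂ = 0` holds identically in `λ` iff the elementary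
Bäcklund transformation `α₂,ₓ = α(α₂β − 1) + α₂((Dα₂)(Dβ) − p₂²)`,
`β₂ = β_x(1 + α₂β) + β((Dα₂)(Dβ) − p₂²)` holds (here `a_x = D(Da)`). -/
theorem eDT2_covariance_iff_backlund {A : Type*} [Ring A] [Algebra ℂ A]
    (S : SuperAlgebra A) (𝒟 : OddDerivation S)
    (α β α₂ β₂ : A) (hα : α ∈ S.A1) (hβ : β ∈ S.A1) (hα₂ : α₂ ∈ S.A1) (hβ₂ : β₂ ∈ S.A1)
    (p₂ : A) (hp₂ : p₂ ∈ S.A0) (hDp₂ : 𝒟.D p₂ = 0) :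
    ((E2poly (fun a => 𝒟.D a) p₂ α₂ β).map (cwise fun a => 𝒟.D a)
        + sdag (E2poly (fun a => 𝒟.D a) p₂ α₂ β) * Lpoly α β
        - Lpoly α₂ β₂ * E2poly (fun a => 𝒟.D a) p₂ α₂ β = 0)
      ↔ (𝒟.D (𝒟.D α₂) = α * (α₂ * β - 1) + α₂ * ((𝒟.D α₂) * (𝒟.D β) - p₂ ^ 2)
          ∧ β₂ = (𝒟.D (𝒟.D β)) * (1 + α₂ * β) + β * ((𝒟.D α₂) * (𝒟.D β) - p₂ ^ 2)) :=
  eDT2_covariance_iff_backlund_general S 𝒟 α β α₂ β₂ hβ hα₂ p₂ hp₂ hDp₂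
end

section
/- (Covariance of the adjoint linear problem.) Let α, β, α₁, β₁ ∈ A₁ and let λ be a fixed element of A₀ with Dλ = 0. Suppose W is an invertible 3×3 matrix over A such that both W and W⁻¹ have the standard parity pattern, and suppose W satisfies the Darboux condition (DW) + W†·L(λ; α, β) − L(λ; α₁, β₁)·W = 0. Then T := (W⁻¹)† satisfies D(T†) = L(λ; α, β)·T† − T·L(λ; α₁, β₁); consequently, if a row vector φ = (f, g, σ) with f, g ∈ A₀ and σ ∈ A₁ solves the adjoint linear problem −D(φ†) = φ·L(λ; α, β), then φT solves −D((φT)†) = (φT)·L(λ; α₁, β₁). -/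
open Polynomial Matrix

/-- A `3 × 3` matrix has the standard parity pattern if its entries at positions
`(1,1), (1,2), (2,1), (2,2), (3,3)` are even and those at `(1,3), (2,3), (3,1), (3,2)`
are odd. -/
def StdParity {A : Type*} [Ring A] [Algebra ℂ A] (S : SuperAlgebra A)
    (M : Matrix (Fin 3) (Fin 3) A) : Prop :=
  ∀ i j : Fin 3,
    if (i = 2 ∧ j ≠ 2) ∨ (i ≠ 2 ∧ j = 2) then M i j ∈ S.A1 else M i j ∈ S.A0

/-- The parity involution on a row vector `φ = (f, g, σ)` with `f, g` even and `σ` odd: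
`φ† = (f, g, −σ)`. -/
def rdag {A : Type*} [Ring A] (v : Fin 3 → A) : Fin 3 → A :=
  fun j => if j = 2 then -v j else v j


section DarbouxAux

variable {A : Type*} [Ring A] [Algebra ℂ A]

/-- The diagonal parity-sign matrix `diag(1,1,-1)`. -/
def Emat (A : Type*) [Ring A] : Matrix (Fin 3) (Fin 3) A := !![1,0,0;0,1,0;0,0,-1]

lemma sdag_eq (M : Matrix (Fin 3) (Fin 3) A) : sdag M = Emat A * M * Emat A := by
  ext i j
  fin_cases i <;> fin_cases j <;>
    simp [sdag, Emat, Matrix.mul_apply, Fin.sum_univ_three, Matrix.vecMul, dotProduct,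
      Matrix.vecHead, Matrix.vecTail]

lemma Emat_mul_Emat : (Emat A * Emat A) = 1 := by
  ext i j; fin_cases i <;> fin_cases j <;>
    simp [Emat, Matrix.mul_apply, Fin.sum_univ_three, Matrix.one_apply, Matrix.vecHead,
      Matrix.vecTail]

lemma sdag_sdag (M : Matrix (Fin 3) (Fin 3) A) : sdag (sdag M) = M := by
  ext i j; simp only [sdag, Matrix.of_apply]; split <;> simp

lemma sdag_mul (M N : Matrix (Fin 3) (Fin 3) A) : sdag (M * N) = sdag M * sdag N := by
  simp only [sdag_eq]
  calc Emat A * (M * N) * Emat A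
      = Emat A * M * (Emat A * Emat A) * N * Emat A := by
        rw [Emat_mul_Emat]; noncomm_ring
    _ = Emat A * M * Emat A * (Emat A * N * Emat A) := by noncomm_ring

lemma sdag_one : sdag (1 : Matrix (Fin 3) (Fin 3) A) = 1 := by
  rw [sdag_eq, mul_one, Emat_mul_Emat]

lemma sdag_sub (M N : Matrix (Fin 3) (Fin 3) A) : sdag (M - N) = sdag M - sdag N := by
  simp only [sdag_eq, mul_sub, sub_mul]

lemma rdag_eq (v : Fin 3 → A) : rdag v = Matrix.vecMul v (Emat A) := by
  funext j; fin_cases j <;>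
    simp [rdag, Emat, Matrix.vecMul, dotProduct, Fin.sum_univ_three, Matrix.vecHead,
      Matrix.vecTail]

variable (S : SuperAlgebra A) (𝒟 : OddDerivation S)

lemma D_one : 𝒟.D 1 = 0 := by
  have h1 : (1 : A) ∈ S.A0 := by simpa using S.algebraMap_mem 1
  have h : 𝒟.D 1 = 𝒟.D 1 + 𝒟.D 1 := by simpa using 𝒟.leibniz_even h1 1
  exact (left_eq_add.mp h)

lemma sdag_map (M : Matrix (Fin 3) (Fin 3) A) :
    (sdag M).map (fun a => 𝒟.D a) = sdag (M.map (fun a => 𝒟.D a)) := by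
  ext i j
  simp only [sdag, Matrix.map_apply, Matrix.of_apply]
  split <;> simp

lemma mat_leibniz (M N : Matrix (Fin 3) (Fin 3) A) (hM : StdParity S M) :
    (M * N).map (fun a => 𝒟.D a)
      = M.map (fun a => 𝒟.D a) * N + sdag M * N.map (fun a => 𝒟.D a) := by
  ext i j
  simp only [Matrix.map_apply, Matrix.mul_apply, Matrix.add_apply, map_sum]
  rw [← Finset.sum_add_distrib]
  refine Finset.sum_congr rfl fun k _ => ?_
  have hp := hM i k
  by_cases h : (i = 2 ∧ k ≠ 2) ∨ (i ≠ 2 ∧ k = 2)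
  · rw [if_pos h] at hp
    rw [𝒟.leibniz_odd hp]
    simp only [sdag, Matrix.of_apply, if_pos h, Matrix.map_apply, neg_mul]
    abel
  · rw [if_neg h] at hp
    rw [𝒟.leibniz_even hp]
    simp only [sdag, Matrix.of_apply, if_neg h, Matrix.map_apply]

lemma vec_leibniz (f g σ : A) (hf : f ∈ S.A0) (hg : g ∈ S.A0) (hσ : σ ∈ S.A1)
    (M : Matrix (Fin 3) (Fin 3) A) :
    (fun j => 𝒟.D (Matrix.vecMul ![f, g, σ] M j))
      = Matrix.vecMul (fun k => 𝒟.D (![f, g, σ] k)) M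
        + Matrix.vecMul (rdag ![f, g, σ]) (M.map (fun a => 𝒟.D a)) := by
  funext j
  simp [Matrix.vecMul, dotProduct, Fin.sum_univ_three, rdag, Matrix.map_apply,
    Matrix.vecHead, Matrix.vecTail, 𝒟.leibniz_even hf, 𝒟.leibniz_even hg, 𝒟.leibniz_odd hσ]
  abel

lemma D_rdag (v : Fin 3 → A) :
    (fun j => 𝒟.D (rdag v j)) = rdag (fun j => 𝒟.D (v j)) := by
  funext j
  simp only [rdag]
  split <;> simp

end DarbouxAux

/-- If `W` is invertible, `W` and `W⁻¹` have the standard parity pattern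
and `W` satisfies the Darboux condition `(DW) + W†L(λ; α, β) − L(λ; α₁, β₁)W = 0`, then
`T := (W⁻¹)†` satisfies `D(T†) = L(λ; α, β)T† − T·L(λ; α₁, β₁)`; consequently any solution
`φ = (f, g, σ)` of the adjoint problem `−D(φ†) = φ·L(λ; α, β)` gives the solution `φT` of
`−D((φT)†) = (φT)·L(λ; α₁, β₁)`. -/
theorem adjoint_darboux_covariance {A : Type*} [Ring A] [Algebra ℂ A]
    (S : SuperAlgebra A) (𝒟 : OddDerivation S)
    (α β α₁ β₁ : A) (hα : α ∈ S.A1) (hβ : β ∈ S.A1) (hα₁ : α₁ ∈ S.A1) (hβ₁ : β₁ ∈ S.A1)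
    (lam : A) (hlam : lam ∈ S.A0) (hDlam : 𝒟.D lam = 0)
    (W Winv : Matrix (Fin 3) (Fin 3) A)
    (hWinv₁ : W * Winv = 1) (hWinv₂ : Winv * W = 1)
    (hWpar : StdParity S W) (hWinvpar : StdParity S Winv)
    (hDarboux : W.map (fun a => 𝒟.D a) + sdag W * Lgen lam α β - Lgen lam α₁ β₁ * W = 0) :
    ((sdag (sdag Winv)).map (fun a => 𝒟.D a)
        = Lgen lam α β * sdag (sdag Winv) - sdag Winv * Lgen lam α₁ β₁)
      ∧ ∀ f g σ : A, f ∈ S.A0 → g ∈ S.A0 → σ ∈ S.A1 →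
          (fun j => -(𝒟.D (rdag ![f, g, σ] j))) = Matrix.vecMul ![f, g, σ] (Lgen lam α β) →
          (fun j => -(𝒟.D (rdag (Matrix.vecMul ![f, g, σ] (sdag Winv)) j)))
            = Matrix.vecMul (Matrix.vecMul ![f, g, σ] (sdag Winv)) (Lgen lam α₁ β₁) := by
  set L : Matrix (Fin 3) (Fin 3) A := Lgen lam α β with hL
  set L₁ : Matrix (Fin 3) (Fin 3) A := Lgen lam α₁ β₁ with hL₁
  set T : Matrix (Fin 3) (Fin 3) A := sdag Winv with hT
  -- the Darboux relation for DW
  have hWD : W.map (fun a => 𝒟.D a) = L₁ * W - sdag W * L := by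
    have h := hDarboux
    rw [sub_eq_zero] at h
    exact eq_sub_of_add_eq h
  -- T * sdag W = 1
  have hTsW : T * sdag W = 1 := by
    rw [hT, ← sdag_mul, hWinv₂, sdag_one]
  -- D of 1 is 0 entrywise
  have h1map : (1 : Matrix (Fin 3) (Fin 3) A).map (fun a => 𝒟.D a) = 0 := by
    ext i j
    simp only [Matrix.map_apply, Matrix.one_apply, Matrix.zero_apply]
    split <;> simp [D_one S 𝒟]
  -- key: D(Winv) = L * Winv - T * L₁
  have key : Winv.map (fun a => 𝒟.D a) = L * Winv - T * L₁ := by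
    have hml := mat_leibniz S 𝒟 Winv W hWinvpar
    rw [hWinv₂, h1map] at hml
    have h2 : Winv.map (fun a => 𝒟.D a) * (W * Winv)
        + T * (W.map (fun a => 𝒟.D a) * Winv) = 0 := by
      have h := congrArg (· * Winv) hml
      simpa [add_mul, mul_assoc, hT] using h.symm
    rw [hWinv₁, mul_one, hWD] at h2
    have h3 : (L₁ * W - sdag W * L) * Winv = L₁ * (W * Winv) - sdag W * (L * Winv) := by
      simp only [sub_mul, mul_assoc]
    rw [h3, hWinv₁, mul_one] at h2
    have h4 : T * (L₁ - sdag W * (L * Winv)) = T * L₁ - L * Winv := by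
      rw [mul_sub, ← mul_assoc, hTsW, one_mul]
    rw [h4] at h2
    have h5 := eq_neg_of_add_eq_zero_left h2
    rw [neg_sub] at h5
    exact h5
  have claim1 : (sdag (sdag Winv)).map (fun a => 𝒟.D a)
      = L * sdag (sdag Winv) - sdag Winv * L₁ := by
    rw [sdag_sdag]; exact key
  refine ⟨claim1, ?_⟩
  intro f g σ hf hg hσ hφ
  set φ : Fin 3 → A := ![f, g, σ] with hφdef
  -- D of T
  have hTD : T.map (fun a => 𝒟.D a) = sdag L * T - Winv * sdag L₁ := by
    rw [hT, sdag_map, key, sdag_sub, sdag_mul, sdag_mul, sdag_sdag]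
  -- derivative of φ from the adjoint equation
  have hDφ : (fun k => 𝒟.D (φ k)) = - Matrix.vecMul φ (L * Emat A) := by
    have h1 : (fun j => 𝒟.D (rdag φ j)) = rdag (fun j => 𝒟.D (φ j)) := D_rdag S 𝒟 φ
    have h2 : rdag (fun j => 𝒟.D (φ j)) = - Matrix.vecMul φ L := by
      funext j
      have h0 := congrFun hφ j
      rw [congrFun h1 j] at h0
      have h0' : rdag (fun j => 𝒟.D (φ j)) j = -(Matrix.vecMul φ L j) := by
        rw [← h0, neg_neg]
      simpa using h0'
    -- apply rdag to both sides
    have h3 : rdag (rdag (fun j => 𝒟.D (φ j))) = rdag (- Matrix.vecMul φ L) := by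
      rw [h2]
    have h4 : rdag (rdag (fun j => 𝒟.D (φ j))) = fun j => 𝒟.D (φ j) := by
      funext j; simp only [rdag]; split <;> simp
    have h5 : rdag (- Matrix.vecMul φ L) = - rdag (Matrix.vecMul φ L) := by
      funext j; simp only [rdag, Pi.neg_apply]; split <;> simp
    rw [h4, h5, rdag_eq, Matrix.vecMul_vecMul] at h3
    exact h3
  -- compute D(ψ) for ψ = φ T
  have hDψ : (fun j => 𝒟.D (Matrix.vecMul φ T j)) = - Matrix.vecMul (Matrix.vecMul φ T) (L₁ * Emat A) := by
    rw [vec_leibniz S 𝒟 f g σ hf hg hσ T, hDφ, hTD, rdag_eq]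
    have e1 : Matrix.vecMul (- Matrix.vecMul φ (L * Emat A)) T
        = - Matrix.vecMul φ (L * Emat A * T) := by
      rw [Matrix.neg_vecMul, Matrix.vecMul_vecMul]
    have e2 : Matrix.vecMul (Matrix.vecMul φ (Emat A)) ((sdag L * T - Winv * sdag L₁))
        = Matrix.vecMul φ (Emat A * (sdag L * T) - Emat A * (Winv * sdag L₁)) := by
      rw [Matrix.vecMul_vecMul, mul_sub]
    rw [e1, e2]
    have e3 : Emat A * (sdag L * T) = L * Emat A * T := by
      rw [sdag_eq]
      calc Emat A * (Emat A * L * Emat A * T) = (Emat A * Emat A) * L * Emat A * T := by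
            noncomm_ring
        _ = L * Emat A * T := by rw [Emat_mul_Emat, one_mul]
    have e4 : Emat A * (Winv * sdag L₁) = T * L₁ * Emat A := by
      rw [sdag_eq, hT, sdag_eq]
      noncomm_ring
    rw [e3, e4]
    have e5 : Matrix.vecMul (Matrix.vecMul φ T) (L₁ * Emat A)
        = Matrix.vecMul φ (T * L₁ * Emat A) := by
      rw [Matrix.vecMul_vecMul, mul_assoc]
    rw [e5]
    funext j
    simp only [Pi.add_apply, Pi.neg_apply]
    rw [Matrix.vecMul_sub]
    simp only [Pi.sub_apply]
    abel
  -- conclude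
  funext j
  have h7 : rdag (fun j => 𝒟.D (Matrix.vecMul φ T j))
      = - Matrix.vecMul (Matrix.vecMul φ T) L₁ := by
    rw [hDψ]
    have hneg : rdag (- Matrix.vecMul (Matrix.vecMul φ T) (L₁ * Emat A))
        = - rdag (Matrix.vecMul (Matrix.vecMul φ T) (L₁ * Emat A)) := by
      funext j; simp only [rdag, Pi.neg_apply]; split <;> simp
    rw [hneg, rdag_eq, Matrix.vecMul_vecMul, mul_assoc, Emat_mul_Emat, mul_one]
  rw [congrFun (D_rdag S 𝒟 (Matrix.vecMul φ T)) j]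
  simp only [h7, Pi.neg_apply, neg_neg]
end

section
/- Let a, b ∈ A₁ and let p ∈ A₀ with Dp = 0. Then E₁(λ, p; a, b)·E₂(λ, p; a, b) = E₂(λ, p; a, b)·E₁(λ, p; a, b) = (λ² − p²)·I₃ identically in λ. In particular, whenever λ² − p² is invertible, (λ² − p²)·(E₁(λ, p; a, b)⁻¹)† = E₂(λ, p; a, b)†, which is the paper's adjoint Darboux matrix T_p(α, β) associated with the elementary Darboux matrix W_p(α, β) = E₁(λ, p; a, b). -/
open Polynomial Matrix

private lemma C_central {A : Type*} [Ring A] {c : A} (h : ∀ x, c * x = x * c)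
    (P : Polynomial A) : Polynomial.C c * P = P * Polynomial.C c := by
  ext n
  rw [Polynomial.coeff_C_mul, Polynomial.coeff_mul_C, h]

private lemma sdag_smul {R : Type*} [Ring R] (c : R) (M : Matrix (Fin 3) (Fin 3) R) :
    sdag (c • M) = c • sdag M := by
  ext i j
  simp only [sdag, Matrix.of_apply, Matrix.smul_apply, smul_eq_mul]
  split <;> simp [mul_neg]

set_option maxHeartbeats 1000000 in
private lemma key_gen {R : Type*} [Ring R] (lam p a b da db : R)
    (hlam : ∀ x, lam * x = x * lam) (hp : ∀ x, p * x = x * p)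
    (hda : ∀ x, da * x = x * da) (hdb : ∀ x, db * x = x * db)
    (ha2 : a * a = 0) (hb2 : b * b = 0) (hba : b * a = -(a * b)) :
    E1gen lam p a b da db * E2gen lam p a b da db = (lam ^ 2 - p ^ 2) • 1
      ∧ E2gen lam p a b da db * E1gen lam p a b da db = (lam ^ 2 - p ^ 2) • 1 := by
  have sw : ∀ c t : R, (∀ x, c * x = x * c) → ∀ x, t * (c * x) = c * (t * x) := by
    intro c t h x; rw [← mul_assoc, ← h, mul_assoc]
  -- swap lemmas (orient: move lam,p,da,db left)
  have e1 : a * lam = lam * a := (hlam a).symm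
  have e2 : b * lam = lam * b := (hlam b).symm
  have e3 : a * p = p * a := (hp a).symm
  have e4 : b * p = p * b := (hp b).symm
  have e5 : a * da = da * a := (hda a).symm
  have e6 : b * da = da * b := (hda b).symm
  have e7 : a * db = db * a := (hdb a).symm
  have e8 : b * db = db * b := (hdb b).symm
  have e9 : p * lam = lam * p := (hlam p).symm
  have e10 : da * lam = lam * da := (hlam da).symm
  have e11 : db * lam = lam * db := (hlam db).symm
  have e12 : da * p = p * da := (hp da).symm
  have e13 : db * p = p * db := (hp db).symm
  have e14 : db * da = da * db := (hda db).symm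
  have f1 : ∀ x, a * (lam * x) = lam * (a * x) := sw lam a hlam
  have f2 : ∀ x, b * (lam * x) = lam * (b * x) := sw lam b hlam
  have f3 : ∀ x, a * (p * x) = p * (a * x) := sw p a hp
  have f4 : ∀ x, b * (p * x) = p * (b * x) := sw p b hp
  have f5 : ∀ x, a * (da * x) = da * (a * x) := sw da a hda
  have f6 : ∀ x, b * (da * x) = da * (b * x) := sw da b hda
  have f7 : ∀ x, a * (db * x) = db * (a * x) := sw db a hdb
  have f8 : ∀ x, b * (db * x) = db * (b * x) := sw db b hdb
  have f9 : ∀ x, p * (lam * x) = lam * (p * x) := sw lam p hlam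
  have f10 : ∀ x, da * (lam * x) = lam * (da * x) := sw lam da hlam
  have f11 : ∀ x, db * (lam * x) = lam * (db * x) := sw lam db hlam
  have f12 : ∀ x, da * (p * x) = p * (da * x) := sw p da hp
  have f13 : ∀ x, db * (p * x) = p * (db * x) := sw p db hp
  have f14 : ∀ x, db * (da * x) = da * (db * x) := sw da db hda
  have g1 : ∀ x, a * (a * x) = 0 := by intro x; rw [← mul_assoc, ha2, zero_mul]
  have g2 : ∀ x, b * (b * x) = 0 := by intro x; rw [← mul_assoc, hb2, zero_mul]
  have g3 : ∀ x, b * (a * x) = -(a * (b * x)) := by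
    intro x; rw [← mul_assoc, hba, neg_mul, mul_assoc]
  constructor <;>
  · rw [E1gen, E2gen, Matrix.mul_fin_three, Matrix.smul_one_eq_diagonal,
      show (Matrix.diagonal fun _ : Fin 3 => lam ^ 2 - p ^ 2)
        = !![lam ^ 2 - p ^ 2, 0, 0; 0, lam ^ 2 - p ^ 2, 0; 0, 0, lam ^ 2 - p ^ 2] by
          ext i j; fin_cases i <;> fin_cases j <;> simp [Matrix.diagonal, Matrix.vecHead, Matrix.vecTail]]
    ext i j
    fin_cases i <;> fin_cases j <;>
    · simp only [Fin.zero_eta, Fin.mk_one, Fin.reduceFinMk, Matrix.of_apply, Matrix.cons_val', Matrix.cons_val_zero,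
        Matrix.cons_val_one, Matrix.head_cons, Matrix.head_fin_const, Matrix.empty_val',
        Matrix.cons_val_fin_one, Fin.isValue, Matrix.cons_val_two, Matrix.tail_cons,
        Matrix.vecCons_const, Matrix.cons_val_succ, Matrix.vecHead, Matrix.vecTail, Function.comp_apply, pow_two]
      simp only [mul_add, add_mul, mul_sub, sub_mul, mul_neg, neg_mul, mul_one, one_mul,
        mul_zero, zero_mul, neg_neg, mul_assoc,
        e1,e2,e3,e4,e5,e6,e7,e8,e9,e10,e11,e12,e13,e14,
        f1,f2,f3,f4,f5,f6,f7,f8,f9,f10,f11,f12,f13,f14,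
        g1,g2,g3, ha2, hb2, hba, neg_zero, add_zero, zero_add, sub_zero, zero_sub, mul_one, mul_zero]
      try rfl
      try abel


/-- `E₁E₂ = E₂E₁ = (λ² − p²)·I₃` identically in `λ`; in particular,
for a fixed even `λ` with `Dλ = 0` such that `λ² − p²` is invertible, any two-sided
inverse `E₁⁻¹` of `E₁` satisfies `(λ² − p²)(E₁⁻¹)† = E₂†`, i.e. the adjoint Darboux
matrix `T_p(α, β)` associated with `W_p(α, β) = E₁`. -/
theorem elementary_darboux_product {A : Type*} [Ring A] [Algebra ℂ A]
    (S : SuperAlgebra A) (𝒟 : OddDerivation S)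
    (a b : A) (ha : a ∈ S.A1) (hb : b ∈ S.A1)
    (p : A) (hp : p ∈ S.A0) (hDp : 𝒟.D p = 0) :
    (E1poly (fun x => 𝒟.D x) p a b * E2poly (fun x => 𝒟.D x) p a b
          = (X ^ 2 - C (p ^ 2)) • (1 : Matrix (Fin 3) (Fin 3) (Polynomial A))
        ∧ E2poly (fun x => 𝒟.D x) p a b * E1poly (fun x => 𝒟.D x) p a b
          = (X ^ 2 - C (p ^ 2)) • (1 : Matrix (Fin 3) (Fin 3) (Polynomial A)))
      ∧ ∀ lam : A, lam ∈ S.A0 → 𝒟.D lam = 0 → IsUnit (lam ^ 2 - p ^ 2) →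
          ∀ Einv : Matrix (Fin 3) (Fin 3) A,
            E1gen lam p a b (𝒟.D a) (𝒟.D b) * Einv = 1 →
            Einv * E1gen lam p a b (𝒟.D a) (𝒟.D b) = 1 →
            (lam ^ 2 - p ^ 2) • sdag Einv = sdag (E2gen lam p a b (𝒟.D a) (𝒟.D b)) := by
  classical
  set Dm := fun x => 𝒟.D x with hDm
  have hDa : 𝒟.D a ∈ S.A0 := 𝒟.map_odd ha
  have hDb : 𝒟.D b ∈ S.A0 := 𝒟.map_odd hb
  have sq_zero : ∀ x ∈ S.A1, x * x = 0 := by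
    intro x hx
    have h := S.odd_anticomm hx hx
    have h2 : x * x + x * x = 0 := by
      nth_rewrite 1 [h]; rw [neg_add_cancel]
    have h3 : (2 : ℂ) • (x * x) = 0 := by
      rw [two_smul]; exact h2
    calc x * x = ((2 : ℂ)⁻¹ * 2) • (x * x) := by norm_num
    _ = (2 : ℂ)⁻¹ • ((2 : ℂ) • (x * x)) := by rw [mul_smul]
    _ = 0 := by rw [h3, smul_zero]
  have ha2 : a * a = 0 := sq_zero a ha
  have hb2 : b * b = 0 := sq_zero b hb
  have hba : b * a = -(a * b) := S.odd_anticomm hb ha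
  -- centrality of even elements
  have hpc : ∀ x, p * x = x * p := S.even_comm hp
  have hdac : ∀ x, 𝒟.D a * x = x * 𝒟.D a := S.even_comm hDa
  have hdbc : ∀ x, 𝒟.D b * x = x * 𝒟.D b := S.even_comm hDb
  -- the polynomial-level identity
  have hXc : ∀ q : Polynomial A, (X : Polynomial A) * q = q * X := fun q => X_mul
  have key := key_gen (X : Polynomial A) (C p) (C a) (C b) (C (𝒟.D a)) (C (𝒟.D b))
    hXc (C_central hpc) (C_central hdac) (C_central hdbc)
    (by rw [← C_mul, ha2, map_zero]) (by rw [← C_mul, hb2, map_zero])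
    (by rw [← C_mul, hba, map_neg, C_mul])
  have hC2 : ((C p : Polynomial A)) ^ 2 = C (p ^ 2) := by rw [← C_pow]
  refine ⟨⟨?_, ?_⟩, ?_⟩
  · have := key.1
    rw [hC2] at this
    exact this
  · have := key.2
    rw [hC2] at this
    exact this
  · intro lam hlam _hDlam _hUnit Einv h1 h2
    have hlamc : ∀ x, lam * x = x * lam := S.even_comm hlam
    have keyA := key_gen lam p a b (𝒟.D a) (𝒟.D b) hlamc hpc hdac hdbc ha2 hb2 hba
    have hE : (lam ^ 2 - p ^ 2) • Einv = E2gen lam p a b (𝒟.D a) (𝒟.D b) := by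
      calc (lam ^ 2 - p ^ 2) • Einv
          = ((lam ^ 2 - p ^ 2) • (1 : Matrix (Fin 3) (Fin 3) A)) * Einv := by
            rw [Matrix.smul_mul, Matrix.one_mul]
        _ = (E2gen lam p a b (𝒟.D a) (𝒟.D b) * E1gen lam p a b (𝒟.D a) (𝒟.D b)) * Einv := by
            rw [keyA.2]
        _ = E2gen lam p a b (𝒟.D a) (𝒟.D b) * (E1gen lam p a b (𝒟.D a) (𝒟.D b) * Einv) := by
            rw [Matrix.mul_assoc]
        _ = E2gen lam p a b (𝒟.D a) (𝒟.D b) := by rw [h1, Matrix.mul_one]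
    rw [← hE, sdag_smul]
end

section
/- (Berezinians of the elementary Darboux matrices.) Let a, b ∈ A₁ and let p ∈ A₀ with Dp = 0. Then Ber(E₁(λ, p; a, b)) = λ² − p², and likewise Ber(E₁(λ, p; a, b)†) = λ² − p². Since the paper's elementary Darboux matrix is W_{p₁}(α,β) = E₁(λ, p₁; α, β₁) and its adjoint Darboux matrix is T_{p₂}(α,β) = E₁(λ, p₂; α₂, β)†, this gives Ber(W_{p₁}) = λ² − p₁² and Ber(T_{p₂}) = λ² − p₂². -/
open Polynomial Matrix

/-- The Berezinian of a `3 × 3` matrix `M = [[𝐀, 𝐁], [𝐂, d]]` in the standard format,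
given a (two-sided) inverse `dinv` of the `(3,3)` entry `d`:
`Ber(M) = det(𝐀 − 𝐁d⁻¹𝐂)·d⁻¹` computed with the usual `2 × 2` determinant. -/
def Ber3 {R : Type*} [Ring R] (M : Matrix (Fin 3) (Fin 3) R) (dinv : R) : R :=
  ((M 0 0 - M 0 2 * dinv * M 2 0) * (M 1 1 - M 1 2 * dinv * M 2 1)
      - (M 0 1 - M 0 2 * dinv * M 2 1) * (M 1 0 - M 1 2 * dinv * M 2 0)) * dinv

private lemma ber_poly_key {A : Type*} [Ring A] (u v w q : A)
    (h1 : (1 + v) * (1 - v) = 1) (h2 : u * (1 - v) = w - q) :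
    (X ^ 2 + C u + X ^ 2 * C v) * (1 - C v) - C w = (X : Polynomial A) ^ 2 - C q := by
  have step : (X ^ 2 + C u + X ^ 2 * C v) * (1 - C v) - C w
      = (X : Polynomial A) ^ 2 * ((1 + C v) * (1 - C v)) + (C (u * (1 - v)) - C w) := by
    simp only [_root_.map_mul, map_sub, _root_.map_one]
    noncomm_ring
  rw [step, h2]
  have h1' : ((1 : Polynomial A) + C v) * (1 - C v) = 1 := by
    have := congrArg (C : A → Polynomial A) h1
    simpa [_root_.map_mul, map_add, map_sub, _root_.map_one] using this
  rw [h1', mul_one, map_sub]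
  abel

/-- `Ber(E₁(λ, p; a, b)) = λ² − p²` and
`Ber(E₁(λ, p; a, b)†) = λ² − p²`, coefficientwise in `λ`; these are the Berezinians of
the elementary Darboux matrix `W_{p₁}(α, β) = E₁(λ, p₁; α, β₁)` and of the adjoint
Darboux matrix `T_{p₂}(α, β) = E₁(λ, p₂; α₂, β)†`. -/
theorem berezinian_elementary_darboux {A : Type*} [Ring A] [Algebra ℂ A]
    (S : SuperAlgebra A) (𝒟 : OddDerivation S)
    (a b : A) (ha : a ∈ S.A1) (hb : b ∈ S.A1)
    (p : A) (hp : p ∈ S.A0) (hDp : 𝒟.D p = 0) :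
    (∀ dinv : Polynomial A,
        (E1poly (fun x => 𝒟.D x) p a b) 2 2 * dinv = 1 →
        dinv * (E1poly (fun x => 𝒟.D x) p a b) 2 2 = 1 →
        Ber3 (E1poly (fun x => 𝒟.D x) p a b) dinv = X ^ 2 - C (p ^ 2))
      ∧ ∀ dinv : Polynomial A,
          (sdag (E1poly (fun x => 𝒟.D x) p a b)) 2 2 * dinv = 1 →
          dinv * (sdag (E1poly (fun x => 𝒟.D x) p a b)) 2 2 = 1 →
          Ber3 (sdag (E1poly (fun x => 𝒟.D x) p a b)) dinv = X ^ 2 - C (p ^ 2) := by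
  -- basic super facts
  have haa : a * a = 0 := by
    have h := S.odd_anticomm ha ha
    have h2 : (2 : ℂ) • (a * a) = 0 := by
      rw [two_smul]; nth_rewrite 1 [h]; exact neg_add_cancel _
    have := congrArg (fun x => ((2 : ℂ)⁻¹) • x) h2
    simpa [smul_smul] using this
  have habab : (a * b) * (a * b) = 0 := by
    have hba : b * a = -(a * b) := by
      have := S.odd_anticomm hb ha
      simpa using this
    calc (a * b) * (a * b) = a * (b * a) * b := by noncomm_ring
      _ = a * (-(a * b)) * b := by rw [hba]
      _ = -((a * a) * (b * b)) := by noncomm_ring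
      _ = 0 := by rw [haa]; simp
  have h1 : ((1 : A) + a * b) * (1 - a * b) = 1 := by
    have : ((1 : A) + a * b) * (1 - a * b) = 1 - (a * b) * (a * b) := by noncomm_ring
    rw [this, habab, sub_zero]
  have hw0 : 𝒟.D a * 𝒟.D b ∈ S.A0 := S.mul_mem00 (𝒟.map_odd ha) (𝒟.map_odd hb)
  have hq0 : p ^ 2 ∈ S.A0 := by
    have := S.mul_mem00 hp hp; simpa [sq] using this
  have hx0 : 𝒟.D a * 𝒟.D b - p ^ 2 ∈ S.A0 := Submodule.sub_mem _ hw0 hq0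
  have h2 : ((1 : A) + a * b) * (𝒟.D a * 𝒟.D b - p ^ 2) * (1 - a * b)
      = 𝒟.D a * 𝒟.D b - p ^ 2 := by
    have hc := S.even_comm hx0 (1 + a * b)
    calc ((1 : A) + a * b) * (𝒟.D a * 𝒟.D b - p ^ 2) * (1 - a * b)
        = ((𝒟.D a * 𝒟.D b - p ^ 2) * (1 + a * b)) * (1 - a * b) := by rw [← hc]
      _ = (𝒟.D a * 𝒟.D b - p ^ 2) * (((1 : A) + a * b) * (1 - a * b)) := by
          rw [mul_assoc]
      _ = 𝒟.D a * 𝒟.D b - p ^ 2 := by rw [h1, mul_one]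
  have key : ∀ (M : Matrix (Fin 3) (Fin 3) (Polynomial A)),
      M 0 0 = X ^ 2 + C ((1 + a * b) * (𝒟.D a * 𝒟.D b - p ^ 2)) →
      M 0 1 = -C (𝒟.D a) → M 1 0 = -C (𝒟.D b) → M 1 1 = 1 - C (a * b) →
      M 1 2 = 0 → M 2 1 = 0 → M 2 2 = 1 →
      M 0 2 * M 2 0 = -(X ^ 2 * C (a * b)) →
      ∀ dinv : Polynomial A, M 2 2 * dinv = 1 → dinv * M 2 2 = 1 →
      Ber3 M dinv = X ^ 2 - C (p ^ 2) := by
    intro M e00 e01 e10 e11 e12 e21 e22 e0220 dinv hdr hdl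
    have hdinv : dinv = 1 := by rw [e22, one_mul] at hdr; exact hdr
    subst hdinv
    simp only [Ber3, e00, e01, e10, e11, e12, e21, mul_one, zero_mul, sub_zero,
      mul_zero]
    have expand : (X ^ 2 + C ((1 + a * b) * (𝒟.D a * 𝒟.D b - p ^ 2))
          - M 0 2 * M 2 0) * (1 - C (a * b)) - -C (𝒟.D a) * -C (𝒟.D b)
        = (X ^ 2 + C ((1 + a * b) * (𝒟.D a * 𝒟.D b - p ^ 2)) + X ^ 2 * C (a * b))
            * (1 - C (a * b)) - C (𝒟.D a * 𝒟.D b) := by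
      rw [e0220]
      simp only [_root_.map_mul]
      noncomm_ring
    rw [expand]
    exact ber_poly_key _ _ _ _ h1 h2
  have e02 : ∀ (i j : Fin 3) (M : Matrix (Fin 3) (Fin 3) (Polynomial A)), True := by
    intro _ _ _; trivial
  constructor
  · intro dinv hdr hdl
    refine key _ ?_ ?_ ?_ ?_ ?_ ?_ ?_ ?_ dinv hdr hdl
    · simp [E1poly, E1gen]
    · simp [E1poly, E1gen]
    · simp [E1poly, E1gen]
    · simp [E1poly, E1gen, sub_eq_add_neg, _root_.map_mul]
    · simp [E1poly, E1gen]
    · simp [E1poly, E1gen]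
    · simp [E1poly, E1gen]
    · show (X * C a) * (-(X * C b)) = _
      have hc : (C a : Polynomial A) * X = X * C a := (commute_X (C a)).symm
      calc (X * C a) * (-(X * C b)) = -(X * (C a * X) * C b) := by noncomm_ring
        _ = -(X * (X * C a) * C b) := by rw [hc]
        _ = -(X ^ 2 * C (a * b)) := by rw [_root_.map_mul]; noncomm_ring
  · intro dinv hdr hdl
    refine key _ ?_ ?_ ?_ ?_ ?_ ?_ ?_ ?_ dinv hdr hdl
    · simp [sdag, E1poly, E1gen]
    · simp [sdag, E1poly, E1gen]
    · simp [sdag, E1poly, E1gen]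
    · simp [sdag, E1poly, E1gen, sub_eq_add_neg, _root_.map_mul]
    · simp [sdag, E1poly, E1gen]
    · simp [sdag, E1poly, E1gen]
    · simp [sdag, E1poly, E1gen]
    · have e02' : (sdag (E1poly (fun x => 𝒟.D x) p a b)) 0 2 = -(X * C a) := by
        simp [sdag, E1poly, E1gen]
      have e20' : (sdag (E1poly (fun x => 𝒟.D x) p a b)) 2 0 = X * C b := by
        simp [sdag, E1poly, E1gen]
      rw [e02', e20']
      have hc : (C a : Polynomial A) * X = X * C a := (commute_X (C a)).symm
      calc (-(X * C a)) * (X * C b) = -(X * (C a * X) * C b) := by noncomm_ring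
        _ = -(X * (X * C a) * C b) := by rw [hc]
        _ = -(X ^ 2 * C (a * b)) := by rw [_root_.map_mul]; noncomm_ring
end

section
/- (Kernel property of eDT-I.) Let α, β ∈ A₁, and assume the linear-problem data at p₁: p₁ ∈ A₀ is invertible with Dp₁ = 0; f₁, g₁ ∈ A₀ with f₁ invertible and σ₁ ∈ A₁ satisfy Df₁ = αg₁, Dg₁ = βf₁ + p₁σ₁, Dσ₁ = p₁g₁; set y₁ = g₁f₁⁻¹, Ω₁ = σ₁f₁⁻¹, and β₁ = p₁⁻¹Ω₁. Then: (i) Dβ₁ = y₁(1 − p₁⁻¹αΩ₁); (ii) λ² + (1+αβ₁)((Dα)(Dβ₁) − p₁²) = λ² − p₁² + y₁(Dα) − p₁αΩ₁, so that E₁(λ, p₁; α, β₁) equals the matrix W_{p₁} with rows [λ² − p₁² + y₁(Dα) − p₁αΩ₁, −(Dα), λα], [−y₁(1 − p₁⁻¹αΩ₁), 1 − p₁⁻¹αΩ₁, 0], [−λp₁⁻¹Ω₁, 0, 1]; and (iii) W_{p₁} evaluated at λ = p₁ annihilates the column vector Ψ₁ = (f₁, g₁, σ₁)ᵀ: W_{p₁}(p₁)·Ψ₁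 = 0. -/
open Polynomial Matrix

private lemma SuperAlgebra.one_mem_A0_s7 {A : Type*} [Ring A] [Algebra ℂ A] (S : SuperAlgebra A) :
    (1 : A) ∈ S.A0 := by simpa using S.algebraMap_mem 1

private lemma SuperAlgebra.inv_mem_A0 {A : Type*} [Ring A] [Algebra ℂ A] (S : SuperAlgebra A)
    {a b : A} (ha : a ∈ S.A0) (h1 : a * b = 1) (h2 : b * a = 1) : b ∈ S.A0 := by
  obtain ⟨e, he, o, ho, hb⟩ : ∃ e ∈ S.A0, ∃ o ∈ S.A1, e + o = b := by
    have : b ∈ S.A0 ⊔ S.A1 := by rw [S.isCompl.sup_eq_top]; trivial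
    exact Submodule.mem_sup.mp this
  have hao1 : a * o ∈ S.A1 := S.mul_mem01 ha ho
  have hsum : a * e + a * o = 1 := by rw [← mul_add, hb, h1]
  have hao0 : a * o ∈ S.A0 := by
    have : a * o = 1 - a * e := by rw [← hsum]; abel
    rw [this]; exact Submodule.sub_mem _ (S.one_mem_A0_s7) (S.mul_mem00 ha he)
  have hao : a * o = 0 := (Submodule.disjoint_def.mp S.isCompl.disjoint) _ hao0 hao1
  have ho0 : o = 0 := by
    have h3 : b * (a * o) = 0 := by rw [hao, mul_zero]
    rwa [← mul_assoc, h2, one_mul] at h3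
  rw [← hb, ho0, add_zero]; exact he

private lemma SuperAlgebra.odd_sq_zero {A : Type*} [Ring A] [Algebra ℂ A] (S : SuperAlgebra A)
    {a : A} (ha : a ∈ S.A1) : a * a = 0 := by
  have h : a * a + a * a = 0 := eq_neg_iff_add_eq_zero.mp (S.odd_anticomm ha ha)
  have h2 : (2 : ℂ) • (a * a) = 0 := by rw [two_smul]; exact h
  calc a * a = (2 : ℂ)⁻¹ • ((2 : ℂ) • (a * a)) := by rw [smul_smul]; norm_num
    _ = 0 := by rw [h2, smul_zero]

/-- **kernel property of eDT-I.** Given a solution `Ψ₁ = (f₁, g₁, σ₁)ᵀ` of the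
linear problem `DΨ₁ = L(p₁; α, β)Ψ₁` with `y₁ = g₁f₁⁻¹`, `Ω₁ = σ₁f₁⁻¹`, `β₁ = p₁⁻¹Ω₁`:
(i) `Dβ₁ = y₁(1 − p₁⁻¹αΩ₁)`; (ii) the `(1,1)` coefficient identity holds, so that
`E₁(λ, p₁; α, β₁)` equals the explicit Darboux matrix `W_{p₁}`; (iii) `W_{p₁}(p₁)·Ψ₁ = 0`. -/
theorem eDT1_kernel_property {A : Type*} [Ring A] [Algebra ℂ A]
    (S : SuperAlgebra A) (𝒟 : OddDerivation S)
    (α β : A) (hα : α ∈ S.A1) (hβ : β ∈ S.A1)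
    (p₁ p1inv : A) (hp₁ : p₁ ∈ S.A0) (hDp₁ : 𝒟.D p₁ = 0)
    (hp1inv : p₁ * p1inv = 1 ∧ p1inv * p₁ = 1)
    (f₁ g₁ σ₁ : A) (hf₁ : f₁ ∈ S.A0) (hg₁ : g₁ ∈ S.A0) (hσ₁ : σ₁ ∈ S.A1)
    (f1inv : A) (hf1inv : f₁ * f1inv = 1 ∧ f1inv * f₁ = 1)
    (hDf₁ : 𝒟.D f₁ = α * g₁) (hDg₁ : 𝒟.D g₁ = β * f₁ + p₁ * σ₁) (hDσ₁ : 𝒟.D σ₁ = p₁ * g₁)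
    (y₁ Ω₁ β₁ : A) (hy₁ : y₁ = g₁ * f1inv) (hΩ₁ : Ω₁ = σ₁ * f1inv) (hβ₁ : β₁ = p1inv * Ω₁) :
    (𝒟.D β₁ = y₁ * (1 - p1inv * α * Ω₁))
      ∧ ((1 + α * β₁) * ((𝒟.D α) * (𝒟.D β₁) - p₁ ^ 2)
          = -(p₁ ^ 2) + y₁ * (𝒟.D α) - p₁ * α * Ω₁)
      ∧ (E1poly (fun x => 𝒟.D x) p₁ α β₁
          = !![X ^ 2 - C (p₁ ^ 2) + C (y₁ * (𝒟.D α)) - C (p₁ * α * Ω₁),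
                 -(C (𝒟.D α)), X * C α;
               -(C (y₁ * (1 - p1inv * α * Ω₁))), C (1 - p1inv * α * Ω₁), 0;
               -(X * C (p1inv * Ω₁)), 0, 1])
      ∧ Matrix.mulVec (E1gen p₁ p₁ α β₁ (𝒟.D α) (𝒟.D β₁)) ![f₁, g₁, σ₁] = 0 := by
  obtain ⟨hp1, hp2⟩ := hp1inv
  obtain ⟨hf1, hf2⟩ := hf1inv
  subst hy₁ hΩ₁ hβ₁
  have hp1inv0 : p1inv ∈ S.A0 := S.inv_mem_A0 hp₁ hp1 hp2
  have hf1inv0 : f1inv ∈ S.A0 := S.inv_mem_A0 hf₁ hf1 hf2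
  have hdα0 : 𝒟.D α ∈ S.A0 := 𝒟.map_odd hα
  have hD1 : 𝒟.D (1 : A) = 0 := by
    have h := 𝒟.leibniz_even S.one_mem_A0_s7 1
    rw [mul_one, one_mul, mul_one] at h
    exact (left_eq_add.mp h)
  have hDp1inv : 𝒟.D p1inv = 0 := by
    have h := 𝒟.leibniz_even hp₁ p1inv
    rw [hp1, hD1, hDp₁, zero_mul, zero_add] at h
    have h2 : p1inv * (p₁ * 𝒟.D p1inv) = 0 := by rw [← h, mul_zero]
    rwa [← mul_assoc, hp2, one_mul] at h2
  have hDfinv : 𝒟.D f1inv = -(f1inv * (α * g₁ * f1inv)) := by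
    have h := 𝒟.leibniz_even hf₁ f1inv
    rw [hf1, hD1, hDf₁] at h
    have h2 : f₁ * 𝒟.D f1inv = -(α * g₁ * f1inv) := by
      rw [eq_neg_iff_add_eq_zero, add_comm]; exact h.symm
    calc 𝒟.D f1inv = f1inv * (f₁ * 𝒟.D f1inv) := by rw [← mul_assoc, hf2, one_mul]
      _ = -(f1inv * (α * g₁ * f1inv)) := by rw [h2, mul_neg]
  have sqσ : σ₁ * σ₁ = 0 := S.odd_sq_zero hσ₁
  have sqσ' : ∀ c, σ₁ * (σ₁ * c) = 0 := fun c => by rw [← mul_assoc, sqσ, zero_mul]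
  have sqα : α * α = 0 := S.odd_sq_zero hα
  have sqα' : ∀ c, α * (α * c) = 0 := fun c => by rw [← mul_assoc, sqα, zero_mul]
  have cp1' : ∀ c, p₁ * (p1inv * c) = c := fun c => by rw [← mul_assoc, hp1, one_mul]
  have cf1' : ∀ c, f₁ * (f1inv * c) = c := fun c => by rw [← mul_assoc, hf1, one_mul]
  have sw_1_0 : p1inv * p₁ = p₁ * p1inv := S.even_comm hp1inv0 p₁
  have swl_1_0 : ∀ c, p1inv * (p₁ * c) = p₁ * (p1inv * c) := fun c => by rw [← mul_assoc, sw_1_0, mul_assoc]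
  have sw_2_0 : f₁ * p₁ = p₁ * f₁ := S.even_comm hf₁ p₁
  have swl_2_0 : ∀ c, f₁ * (p₁ * c) = p₁ * (f₁ * c) := fun c => by rw [← mul_assoc, sw_2_0, mul_assoc]
  have sw_2_1 : f₁ * p1inv = p1inv * f₁ := S.even_comm hf₁ p1inv
  have swl_2_1 : ∀ c, f₁ * (p1inv * c) = p1inv * (f₁ * c) := fun c => by rw [← mul_assoc, sw_2_1, mul_assoc]
  have sw_3_0 : f1inv * p₁ = p₁ * f1inv := S.even_comm hf1inv0 p₁
  have swl_3_0 : ∀ c, f1inv * (p₁ * c) = p₁ * (f1inv * c) := fun c => by rw [← mul_assoc, sw_3_0, mul_assoc]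
  have sw_3_1 : f1inv * p1inv = p1inv * f1inv := S.even_comm hf1inv0 p1inv
  have swl_3_1 : ∀ c, f1inv * (p1inv * c) = p1inv * (f1inv * c) := fun c => by rw [← mul_assoc, sw_3_1, mul_assoc]
  have sw_3_2 : f1inv * f₁ = f₁ * f1inv := S.even_comm hf1inv0 f₁
  have swl_3_2 : ∀ c, f1inv * (f₁ * c) = f₁ * (f1inv * c) := fun c => by rw [← mul_assoc, sw_3_2, mul_assoc]
  have sw_4_0 : g₁ * p₁ = p₁ * g₁ := S.even_comm hg₁ p₁
  have swl_4_0 : ∀ c, g₁ * (p₁ * c) = p₁ * (g₁ * c) := fun c => by rw [← mul_assoc, sw_4_0, mul_assoc]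
  have sw_4_1 : g₁ * p1inv = p1inv * g₁ := S.even_comm hg₁ p1inv
  have swl_4_1 : ∀ c, g₁ * (p1inv * c) = p1inv * (g₁ * c) := fun c => by rw [← mul_assoc, sw_4_1, mul_assoc]
  have sw_4_2 : g₁ * f₁ = f₁ * g₁ := S.even_comm hg₁ f₁
  have swl_4_2 : ∀ c, g₁ * (f₁ * c) = f₁ * (g₁ * c) := fun c => by rw [← mul_assoc, sw_4_2, mul_assoc]
  have sw_4_3 : g₁ * f1inv = f1inv * g₁ := S.even_comm hg₁ f1inv
  have swl_4_3 : ∀ c, g₁ * (f1inv * c) = f1inv * (g₁ * c) := fun c => by rw [← mul_assoc, sw_4_3, mul_assoc]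
  have sw_5_0 : (𝒟.D α) * p₁ = p₁ * (𝒟.D α) := S.even_comm hdα0 p₁
  have swl_5_0 : ∀ c, (𝒟.D α) * (p₁ * c) = p₁ * ((𝒟.D α) * c) := fun c => by rw [← mul_assoc, sw_5_0, mul_assoc]
  have sw_5_1 : (𝒟.D α) * p1inv = p1inv * (𝒟.D α) := S.even_comm hdα0 p1inv
  have swl_5_1 : ∀ c, (𝒟.D α) * (p1inv * c) = p1inv * ((𝒟.D α) * c) := fun c => by rw [← mul_assoc, sw_5_1, mul_assoc]
  have sw_5_2 : (𝒟.D α) * f₁ = f₁ * (𝒟.D α) := S.even_comm hdα0 f₁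
  have swl_5_2 : ∀ c, (𝒟.D α) * (f₁ * c) = f₁ * ((𝒟.D α) * c) := fun c => by rw [← mul_assoc, sw_5_2, mul_assoc]
  have sw_5_3 : (𝒟.D α) * f1inv = f1inv * (𝒟.D α) := S.even_comm hdα0 f1inv
  have swl_5_3 : ∀ c, (𝒟.D α) * (f1inv * c) = f1inv * ((𝒟.D α) * c) := fun c => by rw [← mul_assoc, sw_5_3, mul_assoc]
  have sw_5_4 : (𝒟.D α) * g₁ = g₁ * (𝒟.D α) := S.even_comm hdα0 g₁
  have swl_5_4 : ∀ c, (𝒟.D α) * (g₁ * c) = g₁ * ((𝒟.D α) * c) := fun c => by rw [← mul_assoc, sw_5_4, mul_assoc]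
  have sw_6_0 : σ₁ * p₁ = p₁ * σ₁ := (S.even_comm hp₁ σ₁).symm
  have swl_6_0 : ∀ c, σ₁ * (p₁ * c) = p₁ * (σ₁ * c) := fun c => by rw [← mul_assoc, sw_6_0, mul_assoc]
  have sw_6_1 : σ₁ * p1inv = p1inv * σ₁ := (S.even_comm hp1inv0 σ₁).symm
  have swl_6_1 : ∀ c, σ₁ * (p1inv * c) = p1inv * (σ₁ * c) := fun c => by rw [← mul_assoc, sw_6_1, mul_assoc]
  have sw_6_2 : σ₁ * f₁ = f₁ * σ₁ := (S.even_comm hf₁ σ₁).symm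
  have swl_6_2 : ∀ c, σ₁ * (f₁ * c) = f₁ * (σ₁ * c) := fun c => by rw [← mul_assoc, sw_6_2, mul_assoc]
  have sw_6_3 : σ₁ * f1inv = f1inv * σ₁ := (S.even_comm hf1inv0 σ₁).symm
  have swl_6_3 : ∀ c, σ₁ * (f1inv * c) = f1inv * (σ₁ * c) := fun c => by rw [← mul_assoc, sw_6_3, mul_assoc]
  have sw_6_4 : σ₁ * g₁ = g₁ * σ₁ := (S.even_comm hg₁ σ₁).symm
  have swl_6_4 : ∀ c, σ₁ * (g₁ * c) = g₁ * (σ₁ * c) := fun c => by rw [← mul_assoc, sw_6_4, mul_assoc]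
  have sw_6_5 : σ₁ * (𝒟.D α) = (𝒟.D α) * σ₁ := (S.even_comm hdα0 σ₁).symm
  have swl_6_5 : ∀ c, σ₁ * ((𝒟.D α) * c) = (𝒟.D α) * (σ₁ * c) := fun c => by rw [← mul_assoc, sw_6_5, mul_assoc]
  have sw_7_0 : α * p₁ = p₁ * α := (S.even_comm hp₁ α).symm
  have swl_7_0 : ∀ c, α * (p₁ * c) = p₁ * (α * c) := fun c => by rw [← mul_assoc, sw_7_0, mul_assoc]
  have sw_7_1 : α * p1inv = p1inv * α := (S.even_comm hp1inv0 α).symm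
  have swl_7_1 : ∀ c, α * (p1inv * c) = p1inv * (α * c) := fun c => by rw [← mul_assoc, sw_7_1, mul_assoc]
  have sw_7_2 : α * f₁ = f₁ * α := (S.even_comm hf₁ α).symm
  have swl_7_2 : ∀ c, α * (f₁ * c) = f₁ * (α * c) := fun c => by rw [← mul_assoc, sw_7_2, mul_assoc]
  have sw_7_3 : α * f1inv = f1inv * α := (S.even_comm hf1inv0 α).symm
  have swl_7_3 : ∀ c, α * (f1inv * c) = f1inv * (α * c) := fun c => by rw [← mul_assoc, sw_7_3, mul_assoc]
  have sw_7_4 : α * g₁ = g₁ * α := (S.even_comm hg₁ α).symm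
  have swl_7_4 : ∀ c, α * (g₁ * c) = g₁ * (α * c) := fun c => by rw [← mul_assoc, sw_7_4, mul_assoc]
  have sw_7_5 : α * (𝒟.D α) = (𝒟.D α) * α := (S.even_comm hdα0 α).symm
  have swl_7_5 : ∀ c, α * ((𝒟.D α) * c) = (𝒟.D α) * (α * c) := fun c => by rw [← mul_assoc, sw_7_5, mul_assoc]
  have sw_7_6 : α * σ₁ = -(σ₁ * α) := S.odd_anticomm hα hσ₁
  have swl_7_6 : ∀ c, α * (σ₁ * c) = -(σ₁ * (α * c)) := fun c => by rw [← mul_assoc, sw_7_6, neg_mul, mul_assoc]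

  have hi : 𝒟.D (p1inv * (σ₁ * f1inv)) = g₁ * f1inv * (1 - p1inv * α * (σ₁ * f1inv)) := by
    rw [𝒟.leibniz_even hp1inv0, hDp1inv, zero_mul, zero_add, 𝒟.leibniz_odd hσ₁, hDσ₁, hDfinv]
    simp only [mul_add, add_mul, mul_sub, sub_mul, neg_mul, mul_neg, neg_neg, mul_one, one_mul, mul_zero, zero_mul, add_zero, zero_add, pow_two, mul_assoc, sub_eq_add_neg, sw_1_0, swl_1_0, sw_2_0, swl_2_0, sw_2_1, swl_2_1, sw_3_0, swl_3_0, sw_3_1, swl_3_1, sw_3_2, swl_3_2, sw_4_0, swl_4_0, sw_4_1, swl_4_1, sw_4_2, swl_4_2, sw_4_3, swl_4_3, sw_5_0, swl_5_0, sw_5_1, swl_5_1, sw_5_2, swl_5_2, sw_5_3, swl_5_3, sw_5_4, swl_5_4, sw_6_0, swl_6_0, sw_6_1, swl_6_1, sw_6_2, swl_6_2, sw_6_3, swl_6_3, sw_6_4, swl_6_4, sw_6_5, swl_6_5, sw_7_0, swl_7_0, sw_7_1, swl_7_1, sw_7_2, swl_7_2, sw_7_3, swl_7_3, sw_7_4,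 swl_7_4, sw_7_5, swl_7_5, sw_7_6, swl_7_6, sqσ, sqσ', sqα, sqα', hp1, cp1', hf1, cf1']
    all_goals abel
  have hii : (1 + α * (p1inv * (σ₁ * f1inv))) *
      ((𝒟.D α) * (𝒟.D (p1inv * (σ₁ * f1inv))) - p₁ ^ 2)
      = -(p₁ ^ 2) + g₁ * f1inv * (𝒟.D α) - p₁ * α * (σ₁ * f1inv) := by
    rw [hi]
    simp only [mul_add, add_mul, mul_sub, sub_mul, neg_mul, mul_neg, neg_neg, mul_one, one_mul, mul_zero, zero_mul, add_zero, zero_add, pow_two, mul_assoc, sub_eq_add_neg, sw_1_0, swl_1_0, sw_2_0, swl_2_0, sw_2_1, swl_2_1, sw_3_0, swl_3_0, sw_3_1, swl_3_1, sw_3_2, swl_3_2, sw_4_0, swl_4_0, sw_4_1, swl_4_1, sw_4_2, swl_4_2, sw_4_3, swl_4_3, sw_5_0, swl_5_0, sw_5_1, swl_5_1, sw_5_2, swl_5_2, sw_5_3, swl_5_3, sw_5_4, swl_5_4, sw_6_0, swl_6_0, sw_6_1, swl_6_1, sw_6_2, swl_6_2, sw_6_3, swl_6_3, sw_6_4, swl_6_4,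 sw_6_5, swl_6_5, sw_7_0, swl_7_0, sw_7_1, swl_7_1, sw_7_2, swl_7_2, sw_7_3, swl_7_3, sw_7_4, swl_7_4, sw_7_5, swl_7_5, sw_7_6, swl_7_6, sqσ, sqσ', sqα, sqα', hp1, cp1', hf1, cf1']
    all_goals abel
  refine ⟨hi, hii, ?_, ?_⟩
  · have hab : α * (p1inv * (σ₁ * f1inv)) = p1inv * α * (σ₁ * f1inv) := by
      rw [← mul_assoc, ← S.even_comm hp1inv0 α]
    have hCC : ((1 : Polynomial A) + C α * C (p1inv * (σ₁ * f1inv))) *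
        (C (𝒟.D α) * C (𝒟.D (p1inv * (σ₁ * f1inv))) - C p₁ ^ 2)
        = C (-(p₁ ^ 2) + g₁ * f1inv * (𝒟.D α) - p₁ * α * (σ₁ * f1inv)) := by
      rw [← hii]
      simp only [_root_.map_mul, map_add, map_sub, Polynomial.C_1, map_pow]
    have e00 : (X : Polynomial A) ^ 2 + ((1 : Polynomial A) + C α * C (p1inv * (σ₁ * f1inv))) *
        (C (𝒟.D α) * C (𝒟.D (p1inv * (σ₁ * f1inv))) - C p₁ ^ 2)
        = X ^ 2 - C (p₁ ^ 2) + C (g₁ * f1inv * 𝒟.D α) - C (p₁ * α * (σ₁ * f1inv)) := by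
      rw [hCC, map_sub, map_add, map_neg]
      abel
    have e10 : -(C (𝒟.D (p1inv * (σ₁ * f1inv))))
        = -(C (g₁ * f1inv * (1 - p1inv * α * (σ₁ * f1inv))) : Polynomial A) := by rw [hi]
    have e11 : (1 : Polynomial A) - C α * C (p1inv * (σ₁ * f1inv))
        = C (1 - p1inv * α * (σ₁ * f1inv)) := by
      have h' : C (p1inv * α * (σ₁ * f1inv)) = C α * (C (p1inv * (σ₁ * f1inv)) : Polynomial A) := by
        rw [← hab, _root_.map_mul]
      rw [map_sub, Polynomial.C_1, h']
    simp only [E1poly, E1gen]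
    rw [e00, e10, e11]
  · funext i
    fin_cases i <;>
      simp [Matrix.mulVec, dotProduct, Fin.sum_univ_three, E1gen] <;>
      (try rw [hi]) <;> simp only [mul_add, add_mul, mul_sub, sub_mul, neg_mul, mul_neg, neg_neg, mul_one, one_mul, mul_zero, zero_mul, add_zero, zero_add, pow_two, mul_assoc, sub_eq_add_neg, sw_1_0, swl_1_0, sw_2_0, swl_2_0, sw_2_1, swl_2_1, sw_3_0, swl_3_0, sw_3_1, swl_3_1, sw_3_2, swl_3_2, sw_4_0, swl_4_0, sw_4_1, swl_4_1, sw_4_2, swl_4_2, sw_4_3, swl_4_3, sw_5_0, swl_5_0, sw_5_1, swl_5_1, sw_5_2, swl_5_2, sw_5_3, swl_5_3, sw_5_4, swl_5_4, sw_6_0, swl_6_0, sw_6_1, swl_6_1, sw_6_2, swl_6_2, sw_6_3, swl_6_3, sw_6_4, swl_6_4, sw_6_5, swl_6_5, sw_7_0, swl_7_0, sw_7_1, swl_7_1, sw_7_2, swl_7_2, sw_7_3, swl_7_3, sw_7_4, swl_7_4, sw_7_5, swl_7_5, sw_7_6, swl_7_6, sqσ, sqσ', sqα, sqα', hp1, cp1',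 hf1, cf1'] <;> try abel
end

section
/- (MKdV reduction of the binary Darboux transformation.) Let α, Ω₁ ∈ A₁, let p₁ ∈ A₀ be invertible, let y₁ ∈ A₀ with 1 − y₁² invertible, and let i ∈ ℂ ⊆ A be the imaginary unit. Substitute β = α, p₂ = −ip₁, y₂ = −y₁ and Ω₂ = iΩ₁ into the data of the binary Darboux transformation: k₁ = (p₁² − p₂²)/2, Δ = 2k₁Ω₁Ω₂·(p₁p₂(1+y₁y₂))⁻¹, n₁₃ = 2k₁Ω₂·(p₂(1+y₁y₂))⁻¹, n₃₁ = −2k₁Ω₁·(p₁(1+y₁y₂))⁻¹, n₂₃ = y₁n₁₃, n₃₂ = y₂n₃₁, p₁₂ = −2k₁y₂(1+y₁y₂)⁻¹ + 2p₁k₁y₂Ω₁Ω₂·(p₂(1+y₁y₂)²)⁻¹, p₂₁ = −2k₁y₁(1+y₁y₂)⁻¹ + 2p₂k₁y₁Ω₁Ω₂·(p₁(1+y₁y₂)²)⁻¹, p₁₁ = −(p₁² + p₂²y₁y₂)(1+y₁y₂)⁻¹ + 2p₁k₁Ω₁Ω₂·(p₂(1+y₁y₂)²)⁻¹, p₂₂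 = −(p₂² + p₁²y₁y₂)(1+y₁y₂)⁻¹ − 2p₂k₁Ω₁Ω₂·(p₁(1+y₁y₂)²)⁻¹, α₃ = α − 2k₁Ω₂(p₁ + αΩ₁)·(p₁p₂(1+y₁y₂))⁻¹, β₃ = α + 2k₁Ω₁(p₂ − αΩ₂)·(p₁p₂(1+y₁y₂))⁻¹. Then k₁ = p₁², Δ = 0, the reduction is preserved in the sense that α₃ = β₃ = α + 2p₁(1 − y₁²)⁻¹Ω₁, and the binary Darboux matrix W₃(λ) with rows [λ² + p₁₁, p₁₂, λn₁₃], [p₂₁, λ²(1+Δ) + p₂₂, λn₂₃], [λn₃₁, λn₃₂, λ²(1+Δ) − p₂²] becomes the matrix with rows [λ² − p₁²(1+y₁²)(1−y₁²)⁻¹, 2p₁²y₁(1−y₁²)⁻¹, 2p₁λ(y₁²−1)⁻¹Ω₁], [2p₁²y₁(y₁²−1)⁻¹, λ² + p₁²(1+y₁²)(1−y₁²)⁻¹, 2p₁λy₁(y₁²−1)⁻¹Ω₁], [2p₁λ(y₁²−1)⁻¹Ω₁, 2p₁λy₁(1−y₁²)⁻¹Ω₁, λ² + p₁²]. -/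
open Polynomial Matrix

/-- The binary Darboux matrix `W₃(λ)`, with rows
`[λ² + p₁₁, p₁₂, λn₁₃], [p₂₁, λ²(1+Δ) + p₂₂, λn₂₃], [λn₃₁, λn₃₂, λ²(1+Δ) − p₂²]`. -/
noncomputable def W3mat {A : Type*} [Ring A] (Δ p11 p12 p21 p22 n13 n23 n31 n32 p₂ : A) :
    Matrix (Fin 3) (Fin 3) (Polynomial A) :=
  !![X ^ 2 + C p11, C p12, X * C n13;
     C p21, X ^ 2 * C (1 + Δ) + C p22, X * C n23;
     X * C n31, X * C n32, X ^ 2 * C (1 + Δ) - C (p₂ ^ 2)]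

/-- **MKdV reduction of the binary Darboux transformation.** Under the
formal substitutions `β = α`, `p₂ = −ip₁`, `y₂ = −y₁`, `Ω₂ = iΩ₁` one gets `k₁ = p₁²`,
`Δ = 0`, the reduction is preserved (`α₃ = β₃ = α + 2p₁(1 − y₁²)⁻¹Ω₁`), and the binary
Darboux matrix `W₃` becomes the explicit MKdV Darboux matrix. -/
theorem binary_darboux_mkdv_reduction {A : Type*} [Ring A] [Algebra ℂ A]
    (S : SuperAlgebra A)
    (α Ω₁ : A) (hα : α ∈ S.A1) (hΩ₁ : Ω₁ ∈ S.A1)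
    (p₁ p1inv : A) (hp₁ : p₁ ∈ S.A0) (hp1inv : p₁ * p1inv = 1 ∧ p1inv * p₁ = 1)
    (y₁ : A) (hy₁ : y₁ ∈ S.A0)
    (w : A) (hw : (1 - y₁ ^ 2) * w = 1 ∧ w * (1 - y₁ ^ 2) = 1)
    (w' : A) (hw' : (y₁ ^ 2 - 1) * w' = 1 ∧ w' * (y₁ ^ 2 - 1) = 1)
    (β p₂ y₂ Ω₂ : A) (hβ : β = α)
    (hp₂ : p₂ = -(algebraMap ℂ A Complex.I) * p₁)
    (hy₂ : y₂ = -y₁)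
    (hΩ₂ : Ω₂ = algebraMap ℂ A Complex.I * Ω₁)
    (p2inv : A) (hp2inv : p₂ * p2inv = 1 ∧ p2inv * p₂ = 1)
    (u : A) (hu : (1 + y₁ * y₂) * u = 1 ∧ u * (1 + y₁ * y₂) = 1)
    (m : A) (hm : p₁ * p₂ * (1 + y₁ * y₂) * m = 1 ∧ m * (p₁ * p₂ * (1 + y₁ * y₂)) = 1)
    (k₁ Δ n13 n31 n23 n32 p12 p21 p11 p22 α₃ β₃ : A)
    (hk₁ : k₁ = ((1 : ℂ) / 2) • (p₁ ^ 2 - p₂ ^ 2))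
    (hΔ : Δ = 2 * k₁ * Ω₁ * Ω₂ * m)
    (hn13 : n13 = 2 * k₁ * Ω₂ * (p2inv * u))
    (hn31 : n31 = -(2 * k₁ * Ω₁ * (p1inv * u)))
    (hn23 : n23 = y₁ * n13) (hn32 : n32 = y₂ * n31)
    (hp12 : p12 = -(2 * k₁ * y₂ * u) + 2 * p₁ * k₁ * y₂ * Ω₁ * Ω₂ * (p2inv * u ^ 2))
    (hp21 : p21 = -(2 * k₁ * y₁ * u) + 2 * p₂ * k₁ * y₁ * Ω₁ * Ω₂ * (p1inv * u ^ 2))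
    (hp11 : p11 = -((p₁ ^ 2 + p₂ ^ 2 * y₁ * y₂) * u)
        + 2 * p₁ * k₁ * Ω₁ * Ω₂ * (p2inv * u ^ 2))
    (hp22 : p22 = -((p₂ ^ 2 + p₁ ^ 2 * y₁ * y₂) * u)
        - 2 * p₂ * k₁ * Ω₁ * Ω₂ * (p1inv * u ^ 2))
    (hα₃ : α₃ = α - 2 * k₁ * Ω₂ * (p₁ + α * Ω₁) * m)
    (hβ₃ : β₃ = β + 2 * k₁ * Ω₁ * (p₂ - β * Ω₂) * m) :
    k₁ = p₁ ^ 2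
      ∧ Δ = 0
      ∧ α₃ = β₃
      ∧ α₃ = α + 2 * p₁ * w * Ω₁
      ∧ W3mat Δ p11 p12 p21 p22 n13 n23 n31 n32 p₂
          = !![X ^ 2 - C (p₁ ^ 2 * (1 + y₁ ^ 2) * w), C (2 * p₁ ^ 2 * y₁ * w),
                 X * C (2 * p₁ * w' * Ω₁);
               C (2 * p₁ ^ 2 * y₁ * w'), X ^ 2 + C (p₁ ^ 2 * (1 + y₁ ^ 2) * w),
                 X * C (2 * p₁ * y₁ * w' * Ω₁);
               X * C (2 * p₁ * w' * Ω₁), X * C (2 * p₁ * y₁ * w * Ω₁),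
                 X ^ 2 + C (p₁ ^ 2)] := by

  -- Abbreviate the imaginary unit.
  set J : A := algebraMap ℂ A Complex.I with hJdef
  -- Perform the formal substitutions.
  rw [hβ] at hβ₃
  subst hp₂ hy₂ hΩ₂
  -- Basic facts about `J`.
  have hJ2 : J * J = -1 := by
    rw [hJdef, ← _root_.map_mul, Complex.I_mul_I, _root_.map_neg, _root_.map_one]
  have cJ : ∀ b : A, J * b = b * J := fun b => S.even_comm (S.algebraMap_mem _) b
  have cp : ∀ b : A, p₁ * b = b * p₁ := fun b => S.even_comm hp₁ b
  have cy : ∀ b : A, y₁ * b = b * y₁ := fun b => S.even_comm hy₁ b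
  -- Closure properties of centrality.
  have cmul : ∀ {x y : A}, (∀ b, x * b = b * x) → (∀ b, y * b = b * y) →
      ∀ b, (x * y) * b = b * (x * y) := by
    intro x y hx hy b
    rw [mul_assoc, hy b, ← mul_assoc, hx b, mul_assoc]
  have cneg : ∀ {x : A}, (∀ b, x * b = b * x) → ∀ b, (-x) * b = b * (-x) := by
    intro x hx b
    rw [neg_mul, hx b, mul_neg]
  have cy2 : ∀ b : A, y₁ ^ 2 * b = b * y₁ ^ 2 := by
    intro b
    rw [sq]
    exact cmul cy cy b
  have c1my2 : ∀ b : A, (1 - y₁ ^ 2) * b = b * (1 - y₁ ^ 2) := by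
    intro b
    rw [sub_mul, mul_sub, one_mul, mul_one, cy2 b]
  have cy2m1 : ∀ b : A, (y₁ ^ 2 - 1) * b = b * (y₁ ^ 2 - 1) := by
    intro b
    rw [sub_mul, mul_sub, one_mul, mul_one, cy2 b]
  have c1yy : ∀ b : A, (1 + y₁ * -y₁) * b = b * (1 + y₁ * -y₁) := by
    intro b
    rw [show (1 + y₁ * -y₁ : A) = 1 - y₁ ^ 2 by noncomm_ring]
    exact c1my2 b
  have cinv : ∀ {c d : A}, (∀ b, c * b = b * c) → c * d = 1 → d * c = 1 →
      ∀ b, d * b = b * d := by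
    intro c d hc h1 h2 b
    calc d * b = d * b * (c * d) := by rw [h1, mul_one]
      _ = d * (b * c) * d := by noncomm_ring
      _ = d * (c * b) * d := by rw [← hc b]
      _ = (d * c) * (b * d) := by noncomm_ring
      _ = b * d := by rw [h2, one_mul]
  have cp2 : ∀ b : A, (-J * p₁) * b = b * (-J * p₁) := cmul (cneg cJ) cp
  have cpi : ∀ b : A, p1inv * b = b * p1inv := cinv cp hp1inv.1 hp1inv.2
  have cqi : ∀ b : A, p2inv * b = b * p2inv := cinv cp2 hp2inv.1 hp2inv.2
  have cw : ∀ b : A, w * b = b * w := cinv c1my2 hw.1 hw.2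
  have cv : ∀ b : A, w' * b = b * w' := cinv cy2m1 hw'.1 hw'.2
  have hu' : (1 - y₁ ^ 2) * u = 1 ∧ u * (1 - y₁ ^ 2) = 1 := by
    rw [show (1 - y₁ ^ 2 : A) = 1 + y₁ * -y₁ by noncomm_ring]
    exact hu
  have cu : ∀ b : A, u * b = b * u := cinv c1my2 hu'.1 hu'.2
  have cm : ∀ b : A, m * b = b * m := cinv (cmul (cmul cp cp2) c1yy) hm.1 hm.2
  -- Two-sided inverses are unique.
  have inv_unique : ∀ {c d e : A}, c * d = 1 → e * c = 1 → e = d := by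
    intro c d e h1 h2
    calc e = e * (c * d) := by rw [h1, mul_one]
      _ = (e * c) * d := by rw [← mul_assoc]
      _ = d := by rw [h2, one_mul]
  -- `Ω₁` squares to zero.
  have hO2 : Ω₁ * Ω₁ = 0 := by
    have h := S.odd_anticomm hΩ₁ hΩ₁
    have h2 : (2 : ℂ) • (Ω₁ * Ω₁) = 0 := by
      rw [two_smul]
      nth_rewrite 1 [h]
      exact neg_add_cancel _
    calc Ω₁ * Ω₁ = ((2 : ℂ)⁻¹ * 2) • (Ω₁ * Ω₁) := by norm_num
      _ = (2 : ℂ)⁻¹ • ((2 : ℂ) • (Ω₁ * Ω₁)) := by rw [mul_smul]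
      _ = 0 := by rw [h2, smul_zero]
  -- Key vanishing products involving `α`.
  have hJOaO : (J * Ω₁) * (α * Ω₁) = 0 := by
    calc (J * Ω₁) * (α * Ω₁) = J * ((Ω₁ * α) * Ω₁) := by noncomm_ring
      _ = J * ((-(α * Ω₁)) * Ω₁) := by rw [S.odd_anticomm hΩ₁ hα]
      _ = -(J * (α * (Ω₁ * Ω₁))) := by noncomm_ring
      _ = 0 := by rw [hO2, mul_zero, mul_zero, neg_zero]
  have hOaJO : Ω₁ * (α * (J * Ω₁)) = 0 := by
    calc Ω₁ * (α * (J * Ω₁)) = Ω₁ * ((α * J) * Ω₁) := by noncomm_ring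
      _ = Ω₁ * ((J * α) * Ω₁) := by rw [← cJ α]
      _ = (Ω₁ * J) * (α * Ω₁) := by noncomm_ring
      _ = (J * Ω₁) * (α * Ω₁) := by rw [← cJ Ω₁]
      _ = 0 := hJOaO
  -- `p₂² = -p₁²` and `k₁ = p₁²`.
  have hp2sqA : (-J * p₁) ^ 2 = -(p₁ ^ 2) := by
    calc (-J * p₁) ^ 2 = (J * J) * (p₁ * (p₁ * 1)) := by
          rw [sq]
          calc (-J * p₁) * (-J * p₁) = J * ((p₁ * J) * p₁) := by noncomm_ring
            _ = J * ((J * p₁) * p₁) := by rw [← cJ p₁]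
            _ = (J * J) * (p₁ * (p₁ * 1)) := by noncomm_ring
      _ = -(p₁ ^ 2) := by rw [hJ2]; noncomm_ring
  have hk : k₁ = p₁ ^ 2 := by
    rw [hk₁, hp2sqA, sub_neg_eq_add, ← two_smul ℂ (p₁ ^ 2), smul_smul]
    norm_num
  -- `p2inv = J * p1inv`, `u = w`, `w' = -w`.
  have hstepQ : (-J * p₁) * (J * p1inv) = 1 := by
    calc (-J * p₁) * (J * p1inv) = -(J * ((p₁ * J) * p1inv)) := by noncomm_ring
      _ = -(J * ((J * p₁) * p1inv)) := by rw [← cJ p₁]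
      _ = -((J * J) * (p₁ * p1inv)) := by noncomm_ring
      _ = 1 := by rw [hJ2, hp1inv.1]; noncomm_ring
  have hQe : p2inv = J * p1inv := inv_unique hstepQ hp2inv.2
  have hUe : u = w := inv_unique hw.1 hu'.2
  have hstepV : (y₁ ^ 2 - 1) * (-w) = 1 := by
    calc (y₁ ^ 2 - 1) * (-w) = (1 - y₁ ^ 2) * w := by noncomm_ring
      _ = 1 := hw.1
  have hVe : w' = -w := inv_unique hstepV hw'.2
  have hm2 : m * (p₁ * (-J * p₁) * (1 - y₁ ^ 2)) = 1 := by
    rw [show (1 - y₁ ^ 2 : A) = 1 + y₁ * -y₁ by noncomm_ring]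
    exact hm.2
  -- Set up the commutative subring generated by the relevant elements.
  set s : Set A := {p₁, p1inv, p2inv, y₁, w, w', u, m, J, Ω₁} with hs
  have hcs : ∀ a ∈ s, ∀ b ∈ s, a * b = b * a := by
    intro a ha b hb
    simp only [hs, Set.mem_insert_iff, Set.mem_singleton_iff] at ha hb
    rcases ha with rfl | rfl | rfl | rfl | rfl | rfl | rfl | rfl | rfl | rfl
    · exact cp b
    · exact cpi b
    · exact cqi b
    · exact cy b
    · exact cw b
    · exact cv b
    · exact cu b
    · exact cm b
    · exact cJ b
    · rcases hb with rfl | rfl | rfl | rfl | rfl | rfl | rfl | rfl | rfl | rfl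
      · exact (cp _).symm
      · exact (cpi _).symm
      · exact (cqi _).symm
      · exact (cy _).symm
      · exact (cw _).symm
      · exact (cv _).symm
      · exact (cu _).symm
      · exact (cm _).symm
      · exact (cJ _).symm
      · rfl
  letI : CommRing (Subring.closure s) := Subring.closureCommRingOfComm hcs
  have mp : p₁ ∈ Subring.closure s := Subring.subset_closure (by rw [hs]; simp)
  have mpi : p1inv ∈ Subring.closure s := Subring.subset_closure (by rw [hs]; simp)
  have mqi : p2inv ∈ Subring.closure s := Subring.subset_closure (by rw [hs]; simp)
  have my : y₁ ∈ Subring.closure s := Subring.subset_closure (by rw [hs]; simp)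
  have mw : w ∈ Subring.closure s := Subring.subset_closure (by rw [hs]; simp)
  have mv : w' ∈ Subring.closure s := Subring.subset_closure (by rw [hs]; simp)
  have mu : u ∈ Subring.closure s := Subring.subset_closure (by rw [hs]; simp)
  have mm : m ∈ Subring.closure s := Subring.subset_closure (by rw [hs]; simp)
  have mj : J ∈ Subring.closure s := Subring.subset_closure (by rw [hs]; simp)
  have mo : Ω₁ ∈ Subring.closure s := Subring.subset_closure (by rw [hs]; simp)
  let P : Subring.closure s := ⟨p₁, mp⟩
  let Pi : Subring.closure s := ⟨p1inv, mpi⟩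
  let Qi : Subring.closure s := ⟨p2inv, mqi⟩
  let Y : Subring.closure s := ⟨y₁, my⟩
  let W : Subring.closure s := ⟨w, mw⟩
  let V : Subring.closure s := ⟨w', mv⟩
  let U : Subring.closure s := ⟨u, mu⟩
  let M : Subring.closure s := ⟨m, mm⟩
  let J' : Subring.closure s := ⟨J, mj⟩
  let O : Subring.closure s := ⟨Ω₁, mo⟩
  -- Lifted relations.
  have e1 : P * Pi = 1 := Subtype.ext hp1inv.1
  have e3 : (1 - Y ^ 2) * W = 1 := Subtype.ext hw.1
  have e6 : M * (P * (-J' * P) * (1 - Y ^ 2)) = 1 := Subtype.ext hm2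
  have e7 : J' * J' = -1 := Subtype.ext hJ2
  have e8 : O * O = 0 := Subtype.ext hO2
  have dQ : Qi = J' * Pi := Subtype.ext hQe
  have dU : U = W := Subtype.ext hUe
  have dV : V = -W := Subtype.ext hVe
  -- Subring computations.
  have K13 : 2 * P ^ 2 * (J' * O) * (Qi * U) = 2 * P * V * O := by
    rw [dQ, dU, dV]
    linear_combination (2 * P ^ 2 * Pi * W * O) * e7 - (2 * P * W * O) * e1
  have K31 : -(2 * P ^ 2 * O * (Pi * U)) = 2 * P * V * O := by
    rw [dU, dV]
    linear_combination (-(2 * P * W * O)) * e1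
  have K23 : Y * (2 * P * V * O) = 2 * P * Y * V * O := by ring
  have K32 : -Y * (2 * P * V * O) = 2 * P * Y * W * O := by
    rw [dV]; ring
  have K12 : -(2 * P ^ 2 * -Y * U) + 2 * P * P ^ 2 * -Y * O * (J' * O) * (Qi * U ^ 2)
      = 2 * P ^ 2 * Y * W := by
    rw [dQ, dU]
    linear_combination (-(2 * P ^ 3 * Y * J' ^ 2 * Pi * W ^ 2)) * e8
  have K21 : -(2 * P ^ 2 * Y * U) + 2 * (-J' * P) * P ^ 2 * Y * O * (J' * O) * (Pi * U ^ 2)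
      = 2 * P ^ 2 * Y * V := by
    rw [dU, dV]
    linear_combination (-(2 * J' ^ 2 * P ^ 3 * Y * Pi * W ^ 2)) * e8
  have K11 : -((P ^ 2 + (-J' * P) ^ 2 * Y * -Y) * U) + 2 * P * P ^ 2 * O * (J' * O) * (Qi * U ^ 2)
      = -(P ^ 2 * (1 + Y ^ 2) * W) := by
    rw [dQ, dU]
    linear_combination (P ^ 2 * Y ^ 2 * W) * e7 + (2 * P ^ 3 * J' ^ 2 * Pi * W ^ 2) * e8
  have K22 : -(((-J' * P) ^ 2 + P ^ 2 * Y * -Y) * U)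
        - 2 * (-J' * P) * P ^ 2 * O * (J' * O) * (Pi * U ^ 2)
      = P ^ 2 * (1 + Y ^ 2) * W := by
    rw [dU]
    linear_combination (-(P ^ 2 * W)) * e7 + (2 * J' ^ 2 * P ^ 3 * Pi * W ^ 2) * e8
  have K9 : 2 * P ^ 2 * O * (J' * O) * M = 0 := by
    linear_combination (2 * P ^ 2 * J' * M) * e8
  have K10 : 2 * P ^ 2 * ((J' * O) * P) * M = -(2 * P * W * O) := by
    linear_combination (-(2 * P * O * W)) * e6 + (-(2 * P ^ 3 * J' * M * O)) * e3
  have K11b : 2 * P ^ 2 * (O * (-J' * P)) * M = 2 * P * W * O := by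
    linear_combination (2 * P * O * W) * e6 + (2 * P ^ 3 * J' * M * O) * e3
  -- Scalar identities at the level of `A`.
  have hΔ0 : Δ = 0 := by
    rw [hΔ, hk]
    exact congrArg Subtype.val K9
  have hN13 : n13 = 2 * p₁ * w' * Ω₁ := by
    rw [hn13, hk]
    exact congrArg Subtype.val K13
  have hN31 : n31 = 2 * p₁ * w' * Ω₁ := by
    rw [hn31, hk]
    exact congrArg Subtype.val K31
  have hN23 : n23 = 2 * p₁ * y₁ * w' * Ω₁ := by
    rw [hn23, hN13]
    exact congrArg Subtype.val K23
  have hN32 : n32 = 2 * p₁ * y₁ * w * Ω₁ := by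
    rw [hn32, hN31]
    exact congrArg Subtype.val K32
  have hP12 : p12 = 2 * p₁ ^ 2 * y₁ * w := by
    rw [hp12, hk]
    exact congrArg Subtype.val K12
  have hP21 : p21 = 2 * p₁ ^ 2 * y₁ * w' := by
    rw [hp21, hk]
    exact congrArg Subtype.val K21
  have hP11 : p11 = -(p₁ ^ 2 * (1 + y₁ ^ 2) * w) := by
    rw [hp11, hk]
    exact congrArg Subtype.val K11
  have hP22 : p22 = p₁ ^ 2 * (1 + y₁ ^ 2) * w := by
    rw [hp22, hk]
    exact congrArg Subtype.val K22
  have hA3 : α₃ = α + 2 * p₁ * w * Ω₁ := by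
    rw [hα₃, hk]
    have expand : 2 * p₁ ^ 2 * (J * Ω₁) * (p₁ + α * Ω₁) * m
        = 2 * p₁ ^ 2 * ((J * Ω₁) * p₁) * m + 2 * p₁ ^ 2 * ((J * Ω₁) * (α * Ω₁)) * m := by
      noncomm_ring
    rw [expand, hJOaO, mul_zero, zero_mul, add_zero]
    rw [show 2 * p₁ ^ 2 * ((J * Ω₁) * p₁) * m = -(2 * p₁ * w * Ω₁) from congrArg Subtype.val K10]
    rw [sub_neg_eq_add]
  have hB3 : β₃ = α + 2 * p₁ * w * Ω₁ := by
    rw [hβ₃, hk]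
    have expand : 2 * p₁ ^ 2 * Ω₁ * (-J * p₁ - α * (J * Ω₁)) * m
        = 2 * p₁ ^ 2 * (Ω₁ * (-J * p₁)) * m - 2 * p₁ ^ 2 * (Ω₁ * (α * (J * Ω₁))) * m := by
      noncomm_ring
    rw [expand, hOaJO, mul_zero, zero_mul, sub_zero]
    rw [show 2 * p₁ ^ 2 * (Ω₁ * (-J * p₁)) * m = 2 * p₁ * w * Ω₁ from congrArg Subtype.val K11b]
  refine ⟨hk, hΔ0, hA3.trans hB3.symm, hA3, ?_⟩
  unfold W3mat
  rw [hΔ0, hP11, hP12, hP21, hP22, hN13, hN23, hN31, hN32, hp2sqA]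
  norm_num [sub_eq_add_neg]
end
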